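/- arXiv:2112.10562 — 8 statements merged into one kernel-verified Lean document; each statement's English description precedes it below -/
import Mathlib

section
/- Let G be a graph, σ a total order, and k ≥ 2. If est_r(u, G_σ) ≤ k for every vertex u (i.e., every vertex has at most k disjoint shortest r-qualifying paths), then for every vertex u, Σ_{v ∈ reach_r(u,G_σ)} (k−1)^{r−d_v} ≤ k·(k−1)^{r−1}, where d_v is the minimum i such that v is i-reachable from u. In particular |reach_r(u, G_σ)| ≤ k·(k−1)^{r−1}. -/
/-!
Fix `u` and call a walk from `u` *low* if all its vertices except possibly the last one are
`≤ u`; then `d_v` is the length of a shortest low walk to `v`. Shortest low walks can be chosen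
to form a breadth-first tree rooted at `u` in which every vertex of `reach_r(u)` is a leaf.
For a tree vertex `z`, cutting a tree path at its first vertex above `z` yields a shortest
qualifying path from `z` (a shorter one would shortcut the tree path). The cut paths from `z`
into distinct child subtrees are disjoint, and so is the cut path from `z` back to the root, so
`u` has at most `k` children leading to leaves and every other tree vertex at most `k - 1`.
The weighted count is then Kraft's inequality for such a tree, proved level by level.
-/

open SimpleGraph

variable {V : Type*}

/-- The strict order relation of a linear order. -/
def olt (σ : LinearOrder V) (a b : V) : Prop := σ.lt a b

/-- The set of vertices `r`-reachable from `u` with respect to `σ`: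
vertices `v >_σ u` joined to `u` by a path of length at most `r`
whose internal vertices all precede `u` in `σ`. -/
def reachSet (G : SimpleGraph V) (σ : LinearOrder V) (r : ℕ) (u : V) : Set V :=
  {v | olt σ u v ∧ ∃ p : G.Walk u v, p.IsPath ∧ p.length ≤ r ∧
    ∀ w ∈ p.support, w ≠ u → w ≠ v → olt σ w u}

/-- The set of vertices weakly `r`-reachable from `u` with respect to `σ`:
vertices `v >_σ u` joined to `u` by a path of length at most `r`
whose internal vertices all precede `v` in `σ`. -/
def wreachSet (G : SimpleGraph V) (σ : LinearOrder V) (r : ℕ) (u : V) : Set V :=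
  {v | olt σ u v ∧ ∃ p : G.Walk u v, p.IsPath ∧ p.length ≤ r ∧
    ∀ w ∈ p.support, w ≠ u → w ≠ v → olt σ w v}

/-- `col_r(G_σ)`: the maximum `r`-reach over all vertices. -/
noncomputable def colOrd [Fintype V] (G : SimpleGraph V) (σ : LinearOrder V) (r : ℕ) : ℕ :=
  Finset.univ.sup fun u => (reachSet G σ r u).ncard

/-- `wcol_r(G_σ)`: the maximum weak `r`-reach over all vertices. -/
noncomputable def wcolOrd [Fintype V] (G : SimpleGraph V) (σ : LinearOrder V) (r : ℕ) : ℕ :=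
  Finset.univ.sup fun u => (wreachSet G σ r u).ncard

/-- The `r`-coloring number of `G`. -/
noncomputable def colNum [Fintype V] (G : SimpleGraph V) (r : ℕ) : ℕ :=
  ⨅ σ : LinearOrder V, colOrd G σ r

/-- The weak `r`-coloring number of `G`. -/
noncomputable def wcolNum [Fintype V] (G : SimpleGraph V) (r : ℕ) : ℕ :=
  ⨅ σ : LinearOrder V, wcolOrd G σ r

/-- `p` is an `r`-qualifying path from `u` with respect to the (possibly partial)
order `lt`: a path of length at most `r` ending at a vertex `v` with `v ≠ u`,
`v` not `<` `u`, all of whose internal vertices are `< u`. -/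
def IsQual (G : SimpleGraph V) (lt : V → V → Prop) (r : ℕ) {u v : V} (p : G.Walk u v) : Prop :=
  p.IsPath ∧ p.length ≤ r ∧ v ≠ u ∧ ¬ lt v u ∧ ∀ w ∈ p.support, w ≠ u → w ≠ v → lt w u

/-- The `r`-backconnectivity of `u`: the maximum number of `r`-qualifying paths from `u`
that are pairwise vertex-disjoint apart from `u`. -/
noncomputable def bcon (G : SimpleGraph V) (lt : V → V → Prop) (r : ℕ) (u : V) : ℕ :=
  sSup {n | ∃ f : Fin n → (v : V) × G.Walk u v,
    (∀ i, IsQual G lt r (f i).2) ∧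
    ∀ i j : Fin n, i ≠ j → ∀ w, w ∈ (f i).2.support → w ∈ (f j).2.support → w = u}

/-- A shortest `r`-qualifying path: an `r`-qualifying `u`–`v` path of length `ℓ` such that
there is no `(ℓ-1)`-qualifying `u`–`v` path. -/
def IsShortQual (G : SimpleGraph V) (lt : V → V → Prop) (r : ℕ) {u v : V} (p : G.Walk u v) :
    Prop :=
  IsQual G lt r p ∧ ¬ ∃ q : G.Walk u v, IsQual G lt (p.length - 1) q

/-- The estimated `r`-backconnectivity of `u`: the maximum number of shortest
`r`-qualifying paths from `u` that are pairwise vertex-disjoint apart from `u`. -/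
noncomputable def est (G : SimpleGraph V) (lt : V → V → Prop) (r : ℕ) (u : V) : ℕ :=
  sSup {n | ∃ f : Fin n → (v : V) × G.Walk u v,
    (∀ i, IsShortQual G lt r (f i).2) ∧
    ∀ i j : Fin n, i ≠ j → ∀ w, w ∈ (f i).2.support → w ∈ (f j).2.support → w = u}

/-- The `r`-admissibility of `G`. -/
noncomputable def admNum [Fintype V] (G : SimpleGraph V) (r : ℕ) : ℕ :=
  ⨅ σ : LinearOrder V, Finset.univ.sup fun u => bcon G (olt σ) r u

/-- `d_v(u, G_σ)`: the least `i` such that `v` is `i`-reachable from `u`. -/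
noncomputable def dval (G : SimpleGraph V) (σ : LinearOrder V) (u v : V) : ℕ :=
  sInf {i | v ∈ reachSet G σ i u}

open Finset

section ParentMap

variable {α : Type*} (par : α → α) (dep : α → ℕ)

/- A rooted tree is given by a parent map `par`, and `dep v` is the depth of a leaf `v`;
no compatibility between the two is needed. -/
def ancestor (v : α) (i : ℕ) : α := par^[dep v - i] v

variable {par dep}

theorem ancestor_dep (v : α) : ancestor par dep v (dep v) = v := by
  simp [ancestor]

theorem par_ancestor_succ {v : α} {i : ℕ} (hi : i < dep v) :
    par (ancestor par dep v (i + 1)) = ancestor par dep v i := by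
  rw [ancestor, ancestor, ← Function.iterate_succ_apply' par]
  congr 1
  omega

theorem ancestor_iterate {v : α} {m j : ℕ} (hm : dep (par^[m] v) + m = dep v)
    (hj : j ≤ dep (par^[m] v)) : ancestor par dep (par^[m] v) j = ancestor par dep v j := by
  rw [ancestor, ancestor, ← Function.iterate_add_apply]
  congr 1
  omega

variable [DecidableEq α]

variable (par dep) in
def children (L : Finset α) (i : ℕ) (z : α) : Finset α :=
  {v ∈ L | i < dep v ∧ ancestor par dep v i = z}.image fun v => ancestor par dep v (i + 1)

variable (par dep) in
def level (L : Finset α) (i : ℕ) : Finset α :=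
  {v ∈ L | i ≤ dep v}.image fun v => ancestor par dep v i

variable {L : Finset α}

theorem card_leaves_add_card_le_card_level (hpar : ∀ x, par x ∉ L) (i : ℕ) :
    #{v ∈ L | dep v = i} + #({v ∈ L | i < dep v}.image fun v => ancestor par dep v i) ≤
      #(level par dep L i) := by
  rw [← card_union_of_disjoint]
  · refine card_le_card (union_subset (fun v hv => ?_) (image_subset_image fun v hv => ?_))
    · rw [mem_filter] at hv
      exact mem_image.mpr ⟨v, mem_filter.mpr ⟨hv.1, hv.2.ge⟩, hv.2 ▸ ancestor_dep v⟩
    · rw [mem_filter] at hv ⊢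
      exact ⟨hv.1, hv.2.le⟩
  · rw [Finset.disjoint_left]
    intro v hv hv'
    obtain ⟨w, hw, rfl⟩ := mem_image.mp hv'
    rw [mem_filter] at hw
    rw [← par_ancestor_succ hw.2] at hv
    exact hpar _ (mem_filter.mp hv).1

theorem card_level_succ_le {k i : ℕ} (hbranch : ∀ z, #(children par dep L i z) ≤ k - 1) :
    #(level par dep L (i + 1)) ≤
      (k - 1) * #({v ∈ L | i < dep v}.image fun v => ancestor par dep v i) := by
  refine (card_le_mul_card_image (f := par) _ _ fun z _ => ?_).trans
    (Nat.mul_le_mul_left _ (card_le_card ?_))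
  · refine (card_le_card fun c hc => ?_).trans (hbranch z)
    obtain ⟨hcl, rfl⟩ := mem_filter.mp hc
    obtain ⟨v, hv, rfl⟩ := mem_image.mp hcl
    rw [mem_filter] at hv
    exact mem_image.mpr
      ⟨v, mem_filter.mpr ⟨hv.1, hv.2, (par_ancestor_succ (par := par) hv.2).symm⟩, rfl⟩
  · intro z hz
    obtain ⟨c, hc, rfl⟩ := mem_image.mp hz
    obtain ⟨v, hv, rfl⟩ := mem_image.mp hc
    rw [mem_filter] at hv
    exact mem_image.mpr
      ⟨v, mem_filter.mpr ⟨hv.1, hv.2⟩, (par_ancestor_succ (par := par) hv.2).symm⟩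

theorem level_eq_empty {r i : ℕ} (hdep : ∀ v ∈ L, dep v ≤ r) (hi : r < i) :
    level par dep L i = ∅ := by
  rw [level, image_eq_empty, filter_eq_empty_iff]
  exact fun v hv => by have := hdep v hv; omega

theorem card_leaves_mul_add_card_level_succ_mul_le {r k i : ℕ} (hdep : ∀ v ∈ L, dep v ≤ r)
    (hpar : ∀ x, par x ∉ L) (hbranch : ∀ z, #(children par dep L i z) ≤ k - 1) :
    #{v ∈ L | dep v = i} * (k - 1) ^ (r - i) +
        #(level par dep L (i + 1)) * (k - 1) ^ (r - (i + 1)) ≤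
      #(level par dep L i) * (k - 1) ^ (r - i) := by
  have hsplit := card_leaves_add_card_le_card_level (dep := dep) hpar i
  set inner := {v ∈ L | i < dep v}.image fun v => ancestor par dep v i
  rcases lt_or_ge i r with hir | hri
  · have hsucc : #(level par dep L (i + 1)) ≤ (k - 1) * #inner := card_level_succ_le hbranch
    obtain ⟨m, hm⟩ : ∃ m, r - i = m + 1 := ⟨r - (i + 1), by omega⟩
    rw [hm, show r - (i + 1) = m by omega, pow_succ']
    calc _ ≤ #{v ∈ L | dep v = i} * ((k - 1) * (k - 1) ^ m) +
          (k - 1) * #inner * (k - 1) ^ m := by gcongr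
      _ = (#{v ∈ L | dep v = i} + #inner) * ((k - 1) * (k - 1) ^ m) := by ring
      _ ≤ _ := Nat.mul_le_mul_right _ hsplit
  · rw [level_eq_empty hdep (by omega), card_empty, zero_mul, add_zero]
    exact Nat.mul_le_mul_right _ (by omega)

theorem sum_pow_sub_dep_le {r k : ℕ} (hdep : ∀ v ∈ L, 0 < dep v ∧ dep v ≤ r)
    (hpar : ∀ x, par x ∉ L) (hroot : #(L.image fun v => ancestor par dep v 1) ≤ k)
    (hbranch : ∀ i, 0 < i → ∀ z, #(children par dep L i z) ≤ k - 1) :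
    ∑ v ∈ L, (k - 1) ^ (r - dep v) ≤ k * (k - 1) ^ (r - 1) := by
  -- The potential at level `i`: the leaves of depth `< i` with their weights, plus each vertex of
  -- level `i` weighted like a leaf of depth `i`. Branching at most `k - 1` keeps it from growing.
  have hpotential : ∀ i, 1 ≤ i → ∑ v ∈ L with dep v < i, (k - 1) ^ (r - dep v) +
      #(level par dep L i) * (k - 1) ^ (r - i) ≤ k * (k - 1) ^ (r - 1) := by
    intro i hi
    induction i, hi using Nat.le_induction with
    | base =>
      rw [filter_false_of_mem fun v hv => by have := (hdep v hv).1; omega, sum_empty, zero_add,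
        level, filter_true_of_mem fun v hv => show 1 ≤ dep v from (hdep v hv).1]
      gcongr
    | succ i hi ih =>
      have hfilter :
          {v ∈ L | dep v < i + 1} = {v ∈ L | dep v < i} ∪ {v ∈ L | dep v = i} := by
        ext v
        simp only [mem_union, mem_filter, ← and_or_left]
        exact and_congr_right fun _ => by omega
      have hleaves : ∑ v ∈ L with dep v = i, (k - 1) ^ (r - dep v) =
          #{v ∈ L | dep v = i} * (k - 1) ^ (r - i) := by
        rw [sum_congr rfl fun v hv => by rw [(mem_filter.mp hv).2], sum_const, smul_eq_mul]
      have hstep := card_leaves_mul_add_card_level_succ_mul_le (fun v hv => (hdep v hv).2) hpar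
        (hbranch i hi)
      rw [hfilter, sum_union (disjoint_filter.mpr fun v _ h1 h2 => (ne_of_lt h1) h2), hleaves]
      omega
  have := hpotential (r + 1) (by omega)
  rwa [level_eq_empty (fun v hv => (hdep v hv).2) (Nat.lt_succ_self r), card_empty, zero_mul,
    add_zero, filter_true_of_mem fun v hv => Nat.lt_succ_of_le (hdep v hv).2] at this

end ParentMap

namespace SimpleGraph.Walk

variable {G : SimpleGraph V}

def IsShortestWithin (p : V → Prop) {a b : V} (W : G.Walk a b) : Prop :=
  (∀ x ∈ W.support, p x) ∧
    ∀ W' : G.Walk a b, (∀ x ∈ W'.support, p x) → W.length ≤ W'.length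

theorem IsShortestWithin.isPath [DecidableEq V] {p : V → Prop} {a b : V} {W : G.Walk a b}
    (hW : W.IsShortestWithin p) : W.IsPath :=
  bypass_eq_self_of_length_le_length_bypass W
    (hW.2 _ fun x hx => hW.1 x (support_bypass_subset_support W hx)) ▸ W.bypass_isPath

theorem IsShortestWithin.sub_le_length {p : V → Prop} {a b : V} {W : G.Walk a b}
    (hW : W.IsShortestWithin p) {i j : ℕ} (hj : j ≤ W.length) {c d : V} (q : G.Walk c d)
    (hc : W.getVert i = c) (hd : W.getVert j = d) (hq : ∀ x ∈ q.support, p x) :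
    j - i ≤ q.length := by
  subst hc hd
  have := hW.2 ((W.take i).append (q.append (W.drop j))) fun x hx => by
    rw [mem_support_append_iff, mem_support_append_iff, support_take,
      drop_support_eq_support_drop_min] at hx
    rcases hx with hx | hx | hx
    · exact hW.1 x (List.mem_of_mem_take hx)
    · exact hq x hx
    · exact hW.1 x (List.mem_of_mem_drop hx)
  rw [length_append, length_append, take_length, drop_length] at this
  omega

theorem exists_walk_iterate (f : V → V) (x : V) (n : ℕ)
    (h : ∀ i < n, G.Adj (f^[i] x) (f^[i + 1] x)) :
    ∃ W : G.Walk x (f^[n] x), W.length = n ∧ ∀ i ≤ n, W.getVert i = f^[i] x := by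
  induction n generalizing x with
  | zero => exact ⟨nil, rfl, fun i hi => by simp [Nat.le_zero.mp hi]⟩
  | succ n ih =>
    obtain ⟨W, hlen, hget⟩ := ih (f x) fun i hi => h (i + 1) (by omega)
    have hadj : G.Adj x (f x) := h 0 (by omega)
    refine ⟨cons hadj W, congrArg Nat.succ hlen, ?_⟩
    rintro (_ | i) hi
    · rfl
    · exact (getVert_cons_succ _ _).trans (hget i (by omega))

end SimpleGraph.Walk

open Walk

theorem card_le_est [Finite V] {G : SimpleGraph V} {lt : V → V → Prop} {r : ℕ} {z : V}
    {ι : Type*} (s : Finset ι) (P : ι → (b : V) × G.Walk z b)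
    (hP : ∀ i ∈ s, IsShortQual G lt r (P i).2)
    (hdisj : (s : Set ι).Pairwise fun i j =>
      ∀ w ∈ (P i).2.support, w ∈ (P j).2.support → w = z) :
    #s ≤ est G lt r z := by
  refine le_csSup ⟨Nat.card V, ?_⟩
    ⟨fun m => P (s.equivFin.symm m), fun m => hP _ (s.equivFin.symm m).2, ?_⟩
  · rintro n ⟨f, hf, hfd⟩
    have hinj : Function.Injective fun m => (f m).1 := by
      intro m m' h
      by_contra hne
      refine (hf m).1.2.2.1 (hfd m m' hne _ (end_mem_support _) ?_)
      rw [show (f m).1 = (f m').1 from h]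
      exact end_mem_support _
    simpa using Nat.card_le_card_of_injective _ hinj
  · intro m m' hne
    exact hdisj (s.equivFin.symm m).2 (s.equivFin.symm m').2
      fun h => hne (s.equivFin.symm.injective (Subtype.ext h))

section LinearOrder

variable [LinearOrder V] {G : SimpleGraph V} {u : V} {par : V → V} {r : ℕ}

theorem exists_isShortQual_take {z y : V} (P : G.Walk z y) (hP : P.IsPath) (hzy : z < y)
    (hr : P.length ≤ r)
    (hmin : ∀ n ≤ P.length, ∀ q : G.Walk z (P.getVert n),
      (∀ x ∈ q.support, x ≠ z → x ≠ P.getVert n → x < z) → n ≤ q.length) :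
    ∃ n, IsShortQual G (· < ·) r (P.take n) := by
  classical
  have hex : ∃ n, z < P.getVert n := ⟨P.length, by rwa [P.getVert_length]⟩
  set n := Nat.find hex
  have hn : z < P.getVert n := Nat.find_spec hex
  have hnle : n ≤ P.length := Nat.find_min' hex (by rwa [P.getVert_length])
  have hn0 : n ≠ 0 := fun h => by rw [h, P.getVert_zero] at hn; exact lt_irrefl _ hn
  have hlen : (P.take n).length = n := by rw [take_length]; omega
  have hint : ∀ x ∈ (P.take n).support, x ≠ z → x ≠ P.getVert n → x < z := by
    intro x hx hxz hxn
    obtain ⟨j, rfl, hj⟩ := mem_support_iff_exists_getVert.mp hx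
    rw [take_getVert] at hxz hxn ⊢
    have hjn : j < n := by
      by_contra hjn
      exact hxn (by rw [min_eq_left (by omega)])
    rw [min_eq_right hjn.le] at hxz ⊢
    exact lt_of_le_of_ne (not_lt.mp (Nat.find_min hex hjn)) hxz
  refine ⟨n, ⟨hP.take n, by omega, hn.ne', lt_asymm hn, hint⟩, ?_⟩
  rintro ⟨q, -, hq, -, -, hqint⟩
  have := hmin n hnle q hqint
  omega

variable (G u) in
def LowReachable (x : V) : Prop := ∃ W : G.Walk u x, ∀ y ∈ W.support, y ≤ u ∨ y = x

variable (G u) in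
noncomputable def lowDist (x : V) : ℕ :=
  sInf {n | ∃ W : G.Walk u x, (∀ y ∈ W.support, y ≤ u ∨ y = x) ∧ W.length = n}

/- A breadth-first parent map for the low walks from `u`. Asking `par x ≤ u` also where `par x`
is arbitrary keeps every vertex above `u` out of the range of `par`. -/
variable (G u) in
def IsLowParent (par : V → V) : Prop :=
  ∀ x, par x ≤ u ∧ (LowReachable G u x → x ≠ u →
    G.Adj (par x) x ∧ LowReachable G u (par x) ∧ lowDist G u (par x) + 1 = lowDist G u x)

theorem lowDist_le {x : V} (W : G.Walk u x) (hW : ∀ y ∈ W.support, y ≤ u ∨ y = x) :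
    lowDist G u x ≤ W.length :=
  Nat.sInf_le ⟨W, hW, rfl⟩

theorem lowDist_self : lowDist G u u = 0 :=
  Nat.eq_zero_of_le_zero (lowDist_le nil fun y hy => Or.inr (by simpa using hy))

theorem ne_of_lowDist_pos {x : V} (h : 0 < lowDist G u x) : x ≠ u := by
  rintro rfl
  rw [lowDist_self] at h
  exact lt_irrefl 0 h

theorem LowReachable.exists_isShortestWithin {x : V} (hx : LowReachable G u x) :
    ∃ W : G.Walk u x, W.IsShortestWithin (fun y => y ≤ u ∨ y = x) ∧
      W.length = lowDist G u x := by
  obtain ⟨W, hW⟩ := hx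
  obtain ⟨W', hW', hlen⟩ := Nat.sInf_mem (⟨W.length, W, hW, rfl⟩ :
    {n | ∃ W : G.Walk u x, (∀ y ∈ W.support, y ≤ u ∨ y = x) ∧ W.length = n}.Nonempty)
  exact ⟨W', ⟨hW', fun W'' hW'' => by rw [hlen]; exact lowDist_le W'' hW''⟩, hlen⟩

theorem LowReachable.eq_of_lowDist_eq_zero {x : V} (hx : LowReachable G u x)
    (h : lowDist G u x = 0) : x = u := by
  obtain ⟨W, -, hlen⟩ := hx.exists_isShortestWithin
  exact (eq_of_length_eq_zero (hlen.trans h)).symm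

theorem LowReachable.exists_parent {x : V} (hx : LowReachable G u x) (hxu : x ≠ u) :
    ∃ p, p ≤ u ∧ G.Adj p x ∧ LowReachable G u p ∧ lowDist G u p + 1 = lowDist G u x := by
  classical
  obtain ⟨W, hW, hlen⟩ := hx.exists_isShortestWithin
  have hnil : ¬ W.Nil := fun h => hxu h.eq.symm
  have hlow : ∀ y ∈ W.dropLast.support, y ≤ u := by
    intro y hy
    rw [support_dropLast hnil] at hy
    have hnd := hW.isPath.support_nodup
    rw [← W.dropLast_support_concat, List.nodup_append] at hnd
    refine (hW.1 y (List.mem_of_mem_dropLast hy)).resolve_right ?_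
    rintro rfl
    exact hnd.2.2 y hy y (List.mem_singleton_self y) rfl
  have hp : LowReachable G u W.penultimate := ⟨W.dropLast, fun y hy => Or.inl (hlow y hy)⟩
  refine ⟨W.penultimate, hlow _ (end_mem_support _), adj_penultimate hnil, hp,
    le_antisymm ?_ ?_⟩
  · have := lowDist_le W.dropLast fun y hy => Or.inl (hlow y hy)
    rw [length_dropLast] at this
    have := not_nil_iff_lt_length.mp hnil
    omega
  · obtain ⟨W', hW', hlen'⟩ := hp.exists_isShortestWithin
    have := lowDist_le (W'.concat (adj_penultimate hnil)) fun y hy => by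
      rw [support_concat, List.mem_append, List.mem_singleton] at hy
      rcases hy with hy | hy
      · exact Or.inl ((hW'.1 y hy).elim id fun h => h ▸ hlow _ (end_mem_support _))
      · exact Or.inr hy
    rw [length_concat] at this
    omega

variable (G u) in
theorem exists_isLowParent : ∃ par, IsLowParent G u par := by
  have : ∀ x, ∃ p, p ≤ u ∧ (LowReachable G u x → x ≠ u →
      G.Adj p x ∧ LowReachable G u p ∧ lowDist G u p + 1 = lowDist G u x) := by
    intro x
    by_cases hx : LowReachable G u x ∧ x ≠ u
    · obtain ⟨p, hp, hpx⟩ := hx.1.exists_parent hx.2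
      exact ⟨p, hp, fun _ _ => hpx⟩
    · exact ⟨u, le_rfl, fun h1 h2 => absurd ⟨h1, h2⟩ hx⟩
  choose par hpar using this
  exact ⟨par, hpar⟩

theorem IsLowParent.iterate_le (hpar : IsLowParent G u par) {x : V} {j : ℕ} (hj : 0 < j) :
    par^[j] x ≤ u := by
  obtain ⟨j, rfl⟩ := Nat.exists_eq_add_one_of_ne_zero hj.ne'
  rw [Function.iterate_succ_apply']
  exact (hpar _).1

theorem IsLowParent.iterate (hpar : IsLowParent G u par) {x : V} (hx : LowReachable G u x)
    {j : ℕ} (hj : j ≤ lowDist G u x) :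
    LowReachable G u (par^[j] x) ∧ lowDist G u (par^[j] x) + j = lowDist G u x := by
  induction j with
  | zero => exact ⟨hx, rfl⟩
  | succ j ih =>
    obtain ⟨hr, hd⟩ := ih (by omega)
    have hpos : 0 < lowDist G u (par^[j] x) := by omega
    obtain ⟨-, hr', hd'⟩ := (hpar _).2 hr (ne_of_lowDist_pos hpos)
    rw [Function.iterate_succ_apply']
    exact ⟨hr', by omega⟩

theorem IsLowParent.exists_treeWalk (hpar : IsLowParent G u par) {x : V}
    (hx : LowReachable G u x) :
    ∃ T : G.Walk u x, T.IsShortestWithin (fun y => y ≤ u ∨ y = x) ∧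
      T.length = lowDist G u x ∧
      ∀ j ≤ lowDist G u x, T.getVert j = par^[lowDist G u x - j] x := by
  set d := lowDist G u x
  have hadj : ∀ i < d, G.Adj (par^[i] x) (par^[i + 1] x) := by
    intro i hi
    obtain ⟨hr, hd⟩ := hpar.iterate hx hi.le
    have hpos : 0 < lowDist G u (par^[i] x) := by omega
    rw [Function.iterate_succ_apply']
    exact ((hpar _).2 hr (ne_of_lowDist_pos hpos)).1.symm
  obtain ⟨U, hUlen, hUget⟩ := exists_walk_iterate par x d hadj
  have hroot : par^[d] x = u := by
    obtain ⟨hr, hd⟩ := hpar.iterate hx le_rfl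
    exact hr.eq_of_lowDist_eq_zero (by omega)
  set T := U.reverse.copy hroot rfl with hT
  have hTlen : T.length = d := by rw [hT, length_copy, length_reverse, hUlen]
  have hTget : ∀ j ≤ d, T.getVert j = par^[d - j] x := fun j hj => by
    rw [hT, getVert_copy, getVert_reverse, hUlen]
    exact hUget _ (by omega)
  have hlow : ∀ y ∈ T.support, y ≤ u ∨ y = x := by
    intro y hy
    obtain ⟨j, rfl, hj⟩ := mem_support_iff_exists_getVert.mp hy
    rw [hTget j (hTlen ▸ hj)]
    rcases Nat.eq_zero_or_pos (d - j) with h | h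
    · exact Or.inr (by rw [h]; rfl)
    · exact Or.inl (hpar.iterate_le h)
  exact ⟨T, ⟨hlow, fun W hW => hTlen ▸ lowDist_le W hW⟩, hTlen, hTget⟩

theorem IsLowParent.exists_isShortQual_down (hpar : IsLowParent G u par) {v : V} (huv : u < v)
    (hv : LowReachable G u v) (hvr : lowDist G u v ≤ r) {i : ℕ} (hi : i < lowDist G u v) :
    ∃ b, ∃ P : G.Walk (ancestor par (lowDist G u) v i) b, IsShortQual G (· < ·) r P ∧
      ∀ y ∈ P.support, y ≠ ancestor par (lowDist G u) v i →
        i < lowDist G u y ∧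
          ancestor par (lowDist G u) y (i + 1) = ancestor par (lowDist G u) v (i + 1) := by
  set z := ancestor par (lowDist G u) v i
  obtain ⟨T, hT, hTlen, hTget⟩ := hpar.exists_treeWalk hv
  have hz : T.getVert i = z := hTget i hi.le
  have hzu : z ≤ u := hpar.iterate_le (by omega)
  set P := (T.drop i).copy hz rfl with hP
  have hPr : P.length ≤ r := by rw [hP, length_copy, drop_length, hTlen]; omega
  have hPget : ∀ t, P.getVert t = T.getVert (i + t) := fun t => by
    rw [hP, getVert_copy, drop_getVert]
  have hPpath : P.IsPath := by rw [hP, isPath_copy]; exact hT.isPath.drop i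
  obtain ⟨n, hn⟩ := exists_isShortQual_take P hPpath (hzu.trans_lt huv) hPr fun n hn q hq => by
    rw [hP, length_copy, drop_length] at hn
    have := hT.sub_le_length (i := i) (j := i + n) (by omega) q hz (hPget n).symm fun x hx => by
      by_cases hxz : x = z
      · exact Or.inl (hxz ▸ hzu)
      by_cases hxn : x = P.getVert n
      · exact hT.1 x (by rw [hxn, hPget]; exact getVert_mem_support _ _)
      · exact Or.inl ((hq x hx hxz hxn).le.trans hzu)
    omega
  refine ⟨_, P.take n, hn, fun y hy hyz => ?_⟩
  rw [support_take] at hy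
  obtain ⟨t, rfl, ht⟩ := mem_support_iff_exists_getVert.mp (List.mem_of_mem_take hy)
  rw [hP, length_copy, drop_length, hTlen] at ht
  rw [hPget, hTget _ (by omega)] at hyz ⊢
  have ht0 : t ≠ 0 := by rintro rfl; exact hyz rfl
  obtain ⟨-, hdy⟩ := hpar.iterate hv (j := lowDist G u v - (i + t)) (by omega)
  exact ⟨by omega, ancestor_iterate hdy (by omega)⟩

theorem IsLowParent.exists_isShortQual_up (hpar : IsLowParent G u par) {z : V}
    (hz : LowReachable G u z) (hzu : z ≤ u) (hz0 : 0 < lowDist G u z)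
    (hzr : lowDist G u z ≤ r) :
    ∃ b, ∃ P : G.Walk z b, IsShortQual G (· < ·) r P ∧
      ∀ y ∈ P.support, lowDist G u y ≤ lowDist G u z := by
  obtain ⟨T, hT, hTlen, hTget⟩ := hpar.exists_treeWalk hz
  have hPget : ∀ n, T.reverse.getVert n = T.getVert (lowDist G u z - n) := fun n => by
    rw [getVert_reverse, hTlen]
  have hPmem : ∀ n, T.reverse.getVert n ∈ T.support := fun n => by
    rw [hPget]; exact getVert_mem_support _ _
  have hPr : T.reverse.length ≤ r := by rw [length_reverse, hTlen]; exact hzr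
  obtain ⟨n, hn⟩ := exists_isShortQual_take T.reverse hT.isPath.reverse
      (lt_of_le_of_ne hzu (ne_of_lowDist_pos hz0)) hPr fun n hn q hq => by
    rw [length_reverse, hTlen] at hn
    have := hT.sub_le_length (i := lowDist G u z - n) (j := lowDist G u z) (by omega) q.reverse
        (hPget n).symm (by rw [← hTlen, getVert_length]) fun x hx => by
      rw [support_reverse, List.mem_reverse] at hx
      by_cases hxz : x = z
      · exact Or.inr hxz
      by_cases hxn : x = T.reverse.getVert n
      · exact hT.1 x (hxn ▸ hPmem n)
      · exact Or.inl ((hq x hx hxz hxn).le.trans hzu)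
    rw [length_reverse] at this
    omega
  refine ⟨_, T.reverse.take n, hn, fun y hy => ?_⟩
  rw [support_take, support_reverse] at hy
  obtain ⟨j, rfl, hj⟩ :=
    mem_support_iff_exists_getVert.mp (List.mem_reverse.mp (List.mem_of_mem_take hy))
  rw [hTlen] at hj
  rw [hTget j hj]
  have := (hpar.iterate hz (j := lowDist G u z - j) (by omega)).2
  omega

variable {L : Finset V}

theorem IsLowParent.exists_isShortQual_into_children (hpar : IsLowParent G u par)
    (hL : ∀ v ∈ L, u < v ∧ LowReachable G u v ∧ lowDist G u v ≤ r) (i : ℕ) (z : V) :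
    ∃ P : V → (b : V) × G.Walk z b, ∀ c ∈ children par (lowDist G u) L i z,
      IsShortQual G (· < ·) r (P c).2 ∧
        ∀ y ∈ (P c).2.support, y ≠ z →
          i < lowDist G u y ∧ ancestor par (lowDist G u) y (i + 1) = c := by
  have : ∀ c, ∃ Q : (b : V) × G.Walk z b, c ∈ children par (lowDist G u) L i z →
      IsShortQual G (· < ·) r Q.2 ∧ ∀ y ∈ Q.2.support, y ≠ z →
        i < lowDist G u y ∧ ancestor par (lowDist G u) y (i + 1) = c := by
    intro c
    by_cases hc : c ∈ children par (lowDist G u) L i z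
    · obtain ⟨v, hv, rfl⟩ := mem_image.mp hc
      obtain ⟨hvL, hiv, rfl⟩ := mem_filter.mp hv
      obtain ⟨huv, hvreach, hvr⟩ := hL v hvL
      obtain ⟨b, P, hP⟩ := hpar.exists_isShortQual_down huv hvreach hvr hiv
      exact ⟨⟨b, P⟩, fun _ => hP⟩
    · exact ⟨⟨z, nil⟩, fun h => absurd h hc⟩
  choose P hP using this
  exact ⟨P, hP⟩

theorem IsLowParent.card_children_le_est [Finite V] (hpar : IsLowParent G u par)
    (hL : ∀ v ∈ L, u < v ∧ LowReachable G u v ∧ lowDist G u v ≤ r) (i : ℕ) (z : V) :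
    #(children par (lowDist G u) L i z) ≤ est G (· < ·) r z := by
  obtain ⟨P, hP⟩ := hpar.exists_isShortQual_into_children hL i z
  refine card_le_est _ P (fun c hc => (hP c hc).1) fun c hc c' hc' hne w hw hw' => ?_
  by_contra hwz
  exact hne (((hP c hc).2 w hw hwz).2.symm.trans ((hP c' hc').2 w hw' hwz).2)

theorem IsLowParent.card_children_lt_est [Finite V] (hpar : IsLowParent G u par)
    (hL : ∀ v ∈ L, u < v ∧ LowReachable G u v ∧ lowDist G u v ≤ r) {i : ℕ} (hi : 0 < i)
    {z : V} (hne : (children par (lowDist G u) L i z).Nonempty) :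
    #(children par (lowDist G u) L i z) < est G (· < ·) r z := by
  obtain ⟨P, hP⟩ := hpar.exists_isShortQual_into_children hL i z
  obtain ⟨v, hv, -⟩ := mem_image.mp hne.choose_spec
  obtain ⟨hvL, hiv, rfl⟩ := mem_filter.mp hv
  obtain ⟨hz, hzd⟩ := hpar.iterate (hL v hvL).2.1 (j := lowDist G u v - i) (by omega)
  have hzi : lowDist G u (par^[lowDist G u v - i] v) = i := by omega
  obtain ⟨b, U, hU, hUd⟩ := hpar.exists_isShortQual_up (r := r) hz (hpar.iterate_le (by omega))
    (by omega) (by have := (hL v hvL).2.2; omega)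
  have key := card_le_est (lt := (· < ·)) (r := r)
    (insertNone (children par (lowDist G u) L i (ancestor par (lowDist G u) v i)))
    (fun o => o.elim ⟨b, U⟩ P) ?_ ?_
  · rw [card_insertNone] at key
    exact key
  · rintro (_ | c) hc
    · exact hU
    · exact (hP c (some_mem_insertNone.mp hc)).1
  · rintro (_ | c) hc (_ | c') hc' hne w hw hw' <;> by_contra hwz
    · exact hne rfl
    · have := hUd w hw
      have := ((hP c' (some_mem_insertNone.mp hc')).2 w hw' hwz).1
      omega
    · have := hUd w hw'
      have := ((hP c (some_mem_insertNone.mp hc)).2 w hw hwz).1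
      omega
    · exact hne (congrArg some (((hP c (some_mem_insertNone.mp hc)).2 w hw hwz).2.symm.trans
        ((hP c' (some_mem_insertNone.mp hc')).2 w hw' hwz).2))

theorem sum_pow_sub_lowDist_le [Finite V] {k : ℕ} (hest : ∀ z, est G (· < ·) r z ≤ k)
    (hL : ∀ v ∈ L, u < v ∧ LowReachable G u v ∧ lowDist G u v ≤ r) :
    ∑ v ∈ L, (k - 1) ^ (r - lowDist G u v) ≤ k * (k - 1) ^ (r - 1) := by
  obtain ⟨par, hpar⟩ := exists_isLowParent G u
  have hpos : ∀ v ∈ L, 0 < lowDist G u v := fun v hv => Nat.pos_of_ne_zero fun h =>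
    (hL v hv).1.ne' ((hL v hv).2.1.eq_of_lowDist_eq_zero h)
  have hroot : (L.image fun v => ancestor par (lowDist G u) v 1) =
      children par (lowDist G u) L 0 u := by
    have hanc : ∀ v ∈ L, ancestor par (lowDist G u) v 0 = u := fun v hv => by
      obtain ⟨hr, hd⟩ := hpar.iterate (hL v hv).2.1 le_rfl
      exact hr.eq_of_lowDist_eq_zero (by omega)
    rw [children, filter_true_of_mem fun v hv => ⟨hpos v hv, hanc v hv⟩]
  refine sum_pow_sub_dep_le (fun v hv => ⟨hpos v hv, (hL v hv).2.2⟩)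
    (fun x hx => not_lt_of_ge (hpar x).1 (hL _ hx).1) ?_ fun i hi z => ?_
  · rw [hroot]
    exact (hpar.card_children_le_est hL 0 u).trans (hest u)
  · rcases (children par (lowDist G u) L i z).eq_empty_or_nonempty with h | h
    · rw [h, card_empty]
      exact Nat.zero_le _
    · have := hpar.card_children_lt_est hL hi h
      have := hest z
      omega

theorem mem_reachSet_iff {u v : V} : v ∈ reachSet G ‹LinearOrder V› r u ↔
    u < v ∧ LowReachable G u v ∧ lowDist G u v ≤ r := by
  constructor
  · rintro ⟨huv, p, -, hlen, hint⟩
    have hlow : ∀ y ∈ p.support, y ≤ u ∨ y = v := fun y hy => by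
      by_cases hyu : y = u
      · exact Or.inl hyu.le
      by_cases hyv : y = v
      · exact Or.inr hyv
      · exact Or.inl (hint y hy hyu hyv).le
    exact ⟨huv, ⟨p, hlow⟩, (lowDist_le p hlow).trans hlen⟩
  · rintro ⟨huv, hv, hvr⟩
    obtain ⟨W, hW, hlen⟩ := hv.exists_isShortestWithin
    exact ⟨huv, W, hW.isPath, hlen ▸ hvr,
      fun y hy hyu hyv => lt_of_le_of_ne ((hW.1 y hy).resolve_right hyv) hyu⟩

theorem dval_eq_lowDist {u v : V} (hv : v ∈ reachSet G ‹LinearOrder V› r u) :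
    dval G ‹LinearOrder V› u v = lowDist G u v := by
  obtain ⟨huv, hreach, -⟩ := mem_reachSet_iff.mp hv
  exact le_antisymm (Nat.sInf_le (mem_reachSet_iff.mpr ⟨huv, hreach, le_rfl⟩))
    (le_csInf ⟨r, hv⟩ fun i hi => (mem_reachSet_iff.mp hi).2.2)

end LinearOrder

theorem est_bound_implies_reach_bound [Fintype V] (G : SimpleGraph V)
    (σ : LinearOrder V) (r k : ℕ) (hk : 2 ≤ k)
    (hest : ∀ u, est G (olt σ) r u ≤ k) :
    ∀ u, (∑ᶠ v ∈ reachSet G σ r u, (k - 1) ^ (r - dval G σ u v)) ≤ k * (k - 1) ^ (r - 1) ∧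
      (reachSet G σ r u).ncard ≤ k * (k - 1) ^ (r - 1) := by
  let _ := σ
  intro u
  have hfin := Set.toFinite (reachSet G σ r u)
  have hsum :=
    sum_pow_sub_lowDist_le hest fun v hv => mem_reachSet_iff.mp (hfin.mem_toFinset.mp hv)
  refine ⟨?_, ?_⟩
  · rw [finsum_mem_eq_finite_toFinset_sum _ hfin]
    refine (sum_congr rfl fun v hv => ?_).trans_le hsum
    rw [dval_eq_lowDist (hfin.mem_toFinset.mp hv)]
  · rw [Set.ncard_eq_toFinset_card _ hfin, card_eq_sum_ones]
    exact (sum_le_sum fun v _ => Nat.one_le_pow _ _ (by omega)).trans hsum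
end

section
/- For every graph G, total order σ on V(G), vertex u, and r ≥ 1: wreach_r(u, G_σ) = ⋃_{v ∈ reach_r(u, G_σ)} ({v} ∪ wreach_{r−d_v}(v, G_σ)), where d_v is the minimum i with v ∈ reach_i(u, G_σ). -/
open SimpleGraph

variable {V : Type*}

private lemma split_lemma (G : SimpleGraph V) (σ : LinearOrder V) (u x : V) :
    ∀ {a : V} (p : G.Walk a x), p.IsPath → (a = u ∨ olt σ a u) →
    (∀ w ∈ p.support, w ≠ x → olt σ w x) → olt σ u x →
    ∃ (v : V) (q1 : G.Walk a v) (q2 : G.Walk v x), olt σ u v ∧ q1.IsPath ∧ q2.IsPath ∧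
      q1.length + q2.length = p.length ∧ (∀ w ∈ q1.support, w ∈ p.support) ∧
      (∀ w ∈ q2.support, w ∈ p.support) ∧
      (∀ w ∈ q1.support, w ≠ v → (w = u ∨ olt σ w u)) := by
  letI := σ
  intro a p
  induction p with
  | nil =>
    intro _ ha _ hux
    rcases ha with rfl | ha
    · exact absurd hux (lt_irrefl _)
    · exact absurd (ha.trans hux) (lt_irrefl _)
  | @cons a b _ h q ih =>
    intro hp ha H hux
    rw [SimpleGraph.Walk.cons_isPath_iff] at hp
    by_cases hb : b = u ∨ olt σ b u
    · obtain ⟨v, q1, q2, h1, h2, h3, h4, h5, h6, h7⟩ :=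
        ih hp.1 hb (fun w hw hwx => H w (by simp [hw]) hwx) hux
      refine ⟨v, Walk.cons h q1, q2, h1, ?_, h3, ?_, ?_, ?_, ?_⟩
      · rw [SimpleGraph.Walk.cons_isPath_iff]
        exact ⟨h2, fun hc => hp.2 (h5 a hc)⟩
      · simp only [Walk.length_cons]; omega
      · intro w hw
        simp only [Walk.support_cons, List.mem_cons] at hw ⊢
        rcases hw with rfl | hw
        · exact Or.inl rfl
        · exact Or.inr (h5 w hw)
      · intro w hw
        simp only [Walk.support_cons, List.mem_cons]
        exact Or.inr (h6 w hw)
      · intro w hw hwv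
        simp only [Walk.support_cons, List.mem_cons] at hw
        rcases hw with rfl | hw
        · exact ha
        · exact h7 w hw hwv
    · push_neg at hb
      have hub : olt σ u b := (Ne.lt_or_gt (fun hc => hb.1 hc.symm)).resolve_right hb.2
      refine ⟨b, Walk.cons h Walk.nil, q, hub, ?_, hp.1, ?_, ?_, ?_, ?_⟩
      · rw [SimpleGraph.Walk.cons_isPath_iff]
        exact ⟨Walk.IsPath.nil, by simp [h.ne]⟩
      · simp [Walk.length_cons]; omega
      · intro w hw
        simp only [Walk.support_cons, Walk.support_nil, List.mem_cons,
          List.mem_singleton, List.not_mem_nil, or_false] at hw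
        simp only [Walk.support_cons, List.mem_cons]
        rcases hw with rfl | rfl
        · exact Or.inl rfl
        · exact Or.inr q.start_mem_support
      · intro w hw
        simp only [Walk.support_cons, List.mem_cons]
        exact Or.inr hw
      · intro w hw hwv
        simp only [Walk.support_cons, Walk.support_nil, List.mem_cons,
          List.mem_singleton, List.not_mem_nil, or_false] at hw
        rcases hw with rfl | rfl
        · exact ha
        · exact absurd rfl hwv

theorem wreach_eq_biUnion (G : SimpleGraph V) (σ : LinearOrder V) (u : V) (r : ℕ)
    (hr : 1 ≤ r) :
    wreachSet G σ r u =
      ⋃ v ∈ reachSet G σ r u, ({v} ∪ wreachSet G σ (r - dval G σ u v) v) := by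
  letI := σ
  ext x
  simp only [Set.mem_iUnion, exists_prop]
  constructor
  · rintro ⟨hux, p, hp, hlen, hint⟩
    have H : ∀ w ∈ p.support, w ≠ x → olt σ w x := by
      intro w hw hwx
      by_cases hwu : w = u
      · subst hwu; exact hux
      · exact hint w hw hwu hwx
    obtain ⟨v, q1, q2, huv, hq1, hq2, hlensum, hs1, hs2, hq1int⟩ :=
      split_lemma G σ u x p hp (Or.inl rfl) H hux
    have hvreach : v ∈ reachSet G σ q1.length u :=
      ⟨huv, q1, hq1, le_refl _, fun w hw hwu hwv => (hq1int w hw hwv).resolve_left hwu⟩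
    have hd : dval G σ u v ≤ q1.length := Nat.sInf_le hvreach
    have hvr : v ∈ reachSet G σ r u :=
      ⟨huv, q1, hq1, by omega, fun w hw hwu hwv => (hq1int w hw hwv).resolve_left hwu⟩
    refine ⟨v, hvr, ?_⟩
    by_cases hvx : v = x
    · subst hvx; exact Or.inl rfl
    · refine Or.inr ⟨H v (hs2 v q2.start_mem_support) hvx, q2, hq2, by omega, ?_⟩
      intro w hw _ hwx
      exact H w (hs2 w hw) hwx
  · rintro ⟨v, hvr, hx⟩
    have hne : {i | v ∈ reachSet G σ i u}.Nonempty := ⟨r, hvr⟩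
    have hdmem : v ∈ reachSet G σ (dval G σ u v) u := Nat.sInf_mem hne
    have hdr : dval G σ u v ≤ r := Nat.sInf_le (show r ∈ {i | v ∈ reachSet G σ i u} from hvr)
    rcases hx with rfl | hx
    · obtain ⟨huv, p, hp, hl, hint⟩ := hvr
      exact ⟨huv, p, hp, hl, fun w hw h1 h2 => lt_trans (hint w hw h1 h2) huv⟩
    · obtain ⟨hvx, q, hq, hql, hqint⟩ := hx
      obtain ⟨huv, p, hp, hpl, hpint⟩ := hdmem
      refine ⟨lt_trans huv hvx, (p.append q).bypass, Walk.bypass_isPath _, ?_, ?_⟩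
      · have := Walk.length_bypass_le (p.append q)
        rw [Walk.length_append] at this
        omega
      · intro w hw hwu hwx
        have hw' := Walk.support_bypass_subset _ hw
        rw [Walk.support_append, List.mem_append] at hw'
        rcases hw' with hw' | hw'
        · by_cases hwv : w = v
          · subst hwv; exact hvx
          · exact lt_trans (lt_trans (hpint w hw' hwu hwv) huv) hvx
        · have hw'' := List.mem_of_mem_tail hw'
          by_cases hwv : w = v
          · subst hwv; exact hvx
          · exact hqint w hw'' hwv hwx
end

section
/- Let G be a graph, σ a total order, and k ≥ 2. If for every vertex u, Σ_{v ∈ reach_r(u,G_σ)} (k−1)^{r−d_v} ≤ k·(k−1)^{r−1}, then for every vertex u, |wreach_r(u, G_σ)| ≤ (k^{r+1} − 1)/(k − 1) − 1. -/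
/-!
Split a path witnessing `v ∈ wreach_r(u)` at its first vertex `x` above `u`: the first part shows
`x ∈ reach_r(u)` (so `d_x` is at most its length), and unless `x = v` the rest shows
`v ∈ wreach_{r - d_x}(x)`. Writing `S_j = 1 + k + ⋯ + k^j`, induction on `r` then gives
`|wreach_r(u)| ≤ ∑_{x ∈ reach_r(u)} (|wreach_{r - d_x}(x)| + 1) ≤ ∑_{x ∈ reach_r(u)} S_{r - d_x}`.
Since `S_j (k-1)^{r-1} ≤ S_{r-1} (k-1)^j` for `j ≤ r - 1`, the hypothesis bounds this sum by
`k S_{r-1} = S_r - 1`.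
-/

open SimpleGraph

variable {V : Type*}

open Finset

theorem SimpleGraph.Walk.exists_split_at_first {G : SimpleGraph V} (P : V → Prop) :
    ∀ {a v : V} (p : G.Walk a v), P v → ∃ (x : V) (q : G.Walk a x) (s : G.Walk x v),
      P x ∧ q.append s = p ∧ ∀ w ∈ q.support, w ≠ x → ¬ P w
  | _, _, .nil, hv => ⟨_, .nil, .nil, hv, rfl, by simp⟩
  | a, _, .cons h p, hv => by
    by_cases ha : P a
    · exact ⟨a, .nil, .cons h p, ha, rfl, by simp⟩
    · obtain ⟨x, q, s, hx, rfl, hq⟩ := exists_split_at_first P p hv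
      refine ⟨x, .cons h q, s, hx, rfl, ?_⟩
      simp only [Walk.support_cons, List.mem_cons, forall_eq_or_imp]
      exact ⟨fun _ => ha, hq⟩

theorem reachSet_zero (G : SimpleGraph V) (σ : LinearOrder V) (u : V) :
    reachSet G σ 0 u = ∅ := by
  let := σ
  refine Set.eq_empty_iff_forall_notMem.2 fun v ⟨huv, p, _, hl, _⟩ => ?_
  cases p.eq_of_length_eq_zero (Nat.le_zero.1 hl)
  exact lt_irrefl u huv

theorem wreachSet_zero (G : SimpleGraph V) (σ : LinearOrder V) (u : V) :
    wreachSet G σ 0 u = ∅ := by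
  let := σ
  refine Set.eq_empty_iff_forall_notMem.2 fun v ⟨huv, p, _, hl, _⟩ => ?_
  cases p.eq_of_length_eq_zero (Nat.le_zero.1 hl)
  exact lt_irrefl u huv

section Reach

variable {G : SimpleGraph V} {σ : LinearOrder V}

theorem one_le_dval {n : ℕ} {u x : V} (hx : x ∈ reachSet G σ n u) : 1 ≤ dval G σ u x := by
  refine Nat.one_le_iff_ne_zero.2 fun h0 => ?_
  have hmem : x ∈ reachSet G σ (dval G σ u x) u :=
    Nat.sInf_mem (s := {i | x ∈ reachSet G σ i u}) ⟨n, hx⟩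
  rw [h0, reachSet_zero] at hmem
  exact hmem

theorem exists_mem_reachSet_of_mem_wreachSet {n : ℕ} {u v : V} (hv : v ∈ wreachSet G σ n u) :
    ∃ x ∈ reachSet G σ n u, v = x ∨ v ∈ wreachSet G σ (n - dval G σ u x) x := by
  let := σ
  obtain ⟨huv, p, hp, hl, hint⟩ := hv
  obtain ⟨x, q, s, hux, rfl, hq⟩ := p.exists_split_at_first (olt σ u) huv
  have hlen := Walk.length_append q s
  have hq_int : ∀ w ∈ q.support, w ≠ u → w ≠ x → olt σ w u := fun w hw hwu hwx =>
    lt_of_le_of_ne (not_lt.1 (hq w hw hwx)) hwu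
  have hx : x ∈ reachSet G σ q.length u := ⟨hux, q, hp.of_append_left, le_rfl, hq_int⟩
  have hdx : dval G σ u x ≤ q.length := Nat.sInf_le hx
  refine ⟨x, ⟨hux, q, hp.of_append_left, by omega, hq_int⟩, ?_⟩
  by_cases hxv : x = v
  · exact .inl hxv.symm
  refine .inr ⟨hint x (by simp) (ne_of_gt hux) hxv, s, hp.of_append_right, by omega,
    fun w hw hwx hwv => ?_⟩
  by_cases hwu : w = u
  · exact hwu ▸ huv
  · exact hint w ((Walk.mem_support_append_iff _ _).2 (.inr hw)) hwu hwv

theorem ncard_wreachSet_le_sum [Finite V] (n : ℕ) (u : V) :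
    (wreachSet G σ n u).ncard ≤ ∑ x ∈ (Set.toFinite (reachSet G σ n u)).toFinset,
      ((wreachSet G σ (n - dval G σ u x) x).ncard + 1) := by
  set R := (Set.toFinite (reachSet G σ n u)).toFinset
  have hsub : wreachSet G σ n u ⊆ ⋃ x ∈ R, insert x (wreachSet G σ (n - dval G σ u x) x) := by
    intro v hv
    obtain ⟨x, hx, hvx⟩ := exists_mem_reachSet_of_mem_wreachSet hv
    exact Set.mem_iUnion₂.2 ⟨x, (Set.Finite.mem_toFinset _).2 hx, hvx⟩
  calc (wreachSet G σ n u).ncard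
      ≤ (⋃ x ∈ R, insert x (wreachSet G σ (n - dval G σ u x) x)).ncard :=
        Set.ncard_le_ncard hsub
    _ ≤ ∑ x ∈ R, (insert x (wreachSet G σ (n - dval G σ u x) x)).ncard :=
        R.set_ncard_biUnion_le _
    _ ≤ _ := sum_le_sum fun _ _ => Set.ncard_insert_le _ _

end Reach

section GeomSum

theorem geom_sum_mul_pow_sub_one_le (k m j : ℕ) :
    (∑ i ∈ range m, k ^ i) * (k - 1) ^ j ≤ ∑ i ∈ range (m + j), k ^ i := by
  induction j with
  | zero => simp
  | succ j ih =>
    calc (∑ i ∈ range m, k ^ i) * (k - 1) ^ (j + 1)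
        = (∑ i ∈ range m, k ^ i) * (k - 1) ^ j * (k - 1) := by rw [pow_succ, mul_assoc]
      _ ≤ k * ∑ i ∈ range (m + j), k ^ i := by
        rw [mul_comm k]; exact Nat.mul_le_mul ih (Nat.sub_le k 1)
      _ ≤ ∑ i ∈ range (m + (j + 1)), k ^ i := by
        rw [← add_assoc, geom_sum_succ]; exact Nat.le_succ _

theorem geom_sum_mul_pow_le {k m n : ℕ} (h : m ≤ n) :
    (∑ i ∈ range (m + 1), k ^ i) * (k - 1) ^ n ≤ (∑ i ∈ range (n + 1), k ^ i) * (k - 1) ^ m := by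
  obtain ⟨j, rfl⟩ := Nat.exists_eq_add_of_le h
  rw [pow_add, mul_comm ((k - 1) ^ m), ← mul_assoc, add_right_comm]
  exact Nat.mul_le_mul_right _ (geom_sum_mul_pow_sub_one_le k (m + 1) j)

theorem sum_geom_sum_le {α : Type*} {R : Finset α} {e : α → ℕ} {k m : ℕ} (hk : 2 ≤ k)
    (he : ∀ x ∈ R, e x ≤ m) (hR : ∑ x ∈ R, (k - 1) ^ e x ≤ k * (k - 1) ^ m) :
    ∑ x ∈ R, ∑ i ∈ range (e x + 1), k ^ i ≤ k * ∑ i ∈ range (m + 1), k ^ i := by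
  refine Nat.le_of_mul_le_mul_right ?_ (pow_pos (by omega : 0 < k - 1) m)
  calc (∑ x ∈ R, ∑ i ∈ range (e x + 1), k ^ i) * (k - 1) ^ m
      ≤ ∑ x ∈ R, (∑ i ∈ range (m + 1), k ^ i) * (k - 1) ^ e x := by
        rw [sum_mul]; exact sum_le_sum fun x hx => geom_sum_mul_pow_le (he x hx)
    _ = (∑ i ∈ range (m + 1), k ^ i) * ∑ x ∈ R, (k - 1) ^ e x := (mul_sum _ _ _).symm
    _ ≤ (∑ i ∈ range (m + 1), k ^ i) * (k * (k - 1) ^ m) := Nat.mul_le_mul_left _ hR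
    _ = k * (∑ i ∈ range (m + 1), k ^ i) * (k - 1) ^ m := by ring

end GeomSum

theorem ncard_wreachSet_lt_geom_sum [Finite V] {G : SimpleGraph V} {σ : LinearOrder V} {k : ℕ}
    (hk : 2 ≤ k) (n : ℕ)
    (h : ∀ r ≤ n, ∀ u,
      (∑ᶠ v ∈ reachSet G σ r u, (k - 1) ^ (r - dval G σ u v)) ≤ k * (k - 1) ^ (r - 1))
    (u : V) : (wreachSet G σ n u).ncard < ∑ i ∈ range (n + 1), k ^ i := by
  induction n using Nat.strong_induction_on generalizing u with
  | _ n ih =>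
  rcases n with _ | m
  · simp [wreachSet_zero]
  set R := (Set.toFinite (reachSet G σ (m + 1) u)).toFinset
  have hd : ∀ x ∈ R, 1 ≤ dval G σ u x := fun x hx =>
    one_le_dval ((Set.Finite.mem_toFinset _).1 hx)
  have hsum := h (m + 1) le_rfl u
  rw [finsum_mem_eq_finite_toFinset_sum _ (Set.toFinite _), Nat.add_sub_cancel] at hsum
  calc (wreachSet G σ (m + 1) u).ncard
      ≤ ∑ x ∈ R, ((wreachSet G σ (m + 1 - dval G σ u x) x).ncard + 1) :=
        ncard_wreachSet_le_sum _ _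
    _ ≤ ∑ x ∈ R, ∑ i ∈ range (m + 1 - dval G σ u x + 1), k ^ i := sum_le_sum fun x hx =>
        ih _ (by have := hd x hx; omega) (fun r hr => h r (by omega)) x
    _ ≤ k * ∑ i ∈ range (m + 1), k ^ i :=
        sum_geom_sum_le hk (fun x hx => by have := hd x hx; omega) hsum
    _ < ∑ i ∈ range (m + 1 + 1), k ^ i := by rw [geom_sum_succ (n := m + 1)]; omega

theorem reach_sum_bound_implies_wreach_bound [Fintype V] (G : SimpleGraph V)
    (σ : LinearOrder V) (r k : ℕ) (hk : 2 ≤ k)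
    (h : ∀ r' ≤ r, ∀ u,
      (∑ᶠ v ∈ reachSet G σ r' u, (k - 1) ^ (r' - dval G σ u v)) ≤ k * (k - 1) ^ (r' - 1)) :
    ∀ u, (wreachSet G σ r u).ncard ≤ (k ^ (r + 1) - 1) / (k - 1) - 1 := by
  intro u
  rw [← Nat.geomSum_eq hk]
  exact Nat.le_sub_one_of_lt (ncard_wreachSet_lt_geom_sum hk r h u)
end

section
/- If a graph G has r-admissibility at most k (with k ≥ 2), then col_r(G) ≤ k·(k−1)^{r−1} and wcol_r(G) ≤ (k^{r+1} − 1)/(k − 1). -/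
open SimpleGraph

variable {V : Type*}

/-!
Fix an order witnessing `admNum G r ≤ k`, so that every vertex has `r`-backconnectivity at most
`k`, and a root `u`. For every `v` that is `r`-reachable from `u` take a shortest qualifying path,
breaking ties by the lexicographic order of vertex lists. These canonical paths form a tree: a
vertex common to two of them sits at the same position on both (otherwise one path shortcuts the
other) and is reached along the same prefix (otherwise one path could be made lexicographically
smaller).

The branches of this tree below distinct children of a vertex `x` are disjoint, and cutting each of
them at its first vertex not below `x` gives qualifying paths from `x`; for `x ≠ u` the tree path
back to `u`, cut in the same way, is one more. Hence `u` has at most `k` children and every other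
vertex at most `k - 1`. Label the children of every vertex injectively. The label words of the
canonical paths form a prefix code, so a vertex `r`-reachable from `u` is determined by its word,
padded to length `r`: this gives `k * (k - 1) ^ (r - 1)`. A weakly `r`-reachable vertex is the end
of a chain of `r`-reachability steps of total length at most `r` (cut its path at the first vertex
above the start and recurse), so it is determined by the concatenated words, a word of length at
most `r` over `k` letters; there are `∑ i ≤ r, k ^ i = (k ^ (r + 1) - 1) / (k - 1)` of those.
-/

theorem List.append_lt_append_of_length_eq {α : Type*} [LinearOrder α] {a b : List α}
    (h : a < b) (hlen : a.length = b.length) (c : List α) : a ++ c < b ++ c := by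
  induction h with
  | nil => simp at hlen
  | cons _ ih => exact List.Lex.cons (ih (by simpa using hlen))
  | rel h => exact List.Lex.rel h

theorem List.prefix_or_prefix_of_getD_eq {α : Type*} {l₁ l₂ : List α} {d : α}
    (h : ∀ i < min l₁.length l₂.length, l₁.getD i d = l₂.getD i d) :
    l₁ <+: l₂ ∨ l₂ <+: l₁ := by
  rcases le_total l₁.length l₂.length with hle | hle
  · refine Or.inl (List.prefix_iff_getElem.2 ⟨hle, fun i hi => ?_⟩)
    simpa [List.getD_eq_getElem, hi, hi.trans_le hle] using h i (by omega)
  · refine Or.inr (List.prefix_iff_getElem.2 ⟨hle, fun i hi => ?_⟩)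
    simpa [List.getD_eq_getElem, hi, hi.trans_le hle] using (h i (by omega)).symm

theorem List.exists_finset_of_length_le_of_forall_lt (k r : ℕ) :
    ∃ t : Finset (List ℕ), (∀ l : List ℕ, l.length ≤ r → (∀ a ∈ l, a < k) → l ∈ t) ∧
      t.card ≤ ∑ n ∈ Finset.range (r + 1), k ^ n := by
  refine ⟨(Finset.range (r + 1)).biUnion fun n =>
    (Fintype.piFinset fun _ : Fin n => Finset.range k).image List.ofFn, fun l hl hlk => ?_, ?_⟩
  · refine Finset.mem_biUnion.2 ⟨l.length, Finset.mem_range.2 (by omega), ?_⟩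
    exact Finset.mem_image.2 ⟨l.get, by simpa using fun i => hlk _ (l.get_mem i), List.ofFn_get l⟩
  · refine Finset.card_biUnion_le.trans (Finset.sum_le_sum fun n _ => ?_)
    exact Finset.card_image_le.trans (by simp)

theorem Fin.prod_ite_val_eq_zero_le (k r : ℕ) (hk : 1 ≤ k) :
    ∏ i : Fin r, (if (i : ℕ) = 0 then k else k - 1) ≤ k * (k - 1) ^ (r - 1) := by
  cases r with
  | zero => simpa using hk
  | succ r => simp [Fin.prod_univ_succ]

theorem Set.ncard_le_card_of_encoding {α β : Type*} [Nonempty β] {s : Set α} (t : Finset β)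
    (R : β → α → Prop) (hex : ∀ a ∈ s, ∃ b ∈ t, R b a)
    (huniq : ∀ b a a', R b a → R b a' → a = a') : s.ncard ≤ t.card := by
  choose! f hft hR using hex
  calc s.ncard ≤ (t : Set β).ncard :=
        Set.ncard_le_ncard_of_injOn f hft
          fun a ha a' ha' h => huniq _ _ _ (hR a ha) (h ▸ hR a' ha')
    _ = t.card := Set.ncard_coe_finset t

theorem Set.exists_injOn_lt_of_ncard_le {α : Type*} {s : Set α} [Finite s] {b : ℕ}
    (h : s.ncard ≤ b) : ∃ f : α → ℕ, s.InjOn f ∧ ∀ a ∈ s, f a < b := by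
  classical
  let e := Finite.equivFin s
  refine ⟨fun a => if ha : a ∈ s then e ⟨a, ha⟩ else 0, fun a ha a' ha' hf => ?_, fun a ha => ?_⟩
  · simp only [ha, ha', dite_true, Fin.val_inj, e.apply_eq_iff_eq, Subtype.mk.injEq] at hf
    exact hf
  · simp only [ha, dite_true]
    exact (e _).2.trans_le (by rwa [Nat.card_coe_set_eq])

namespace SimpleGraph.Walk

variable {G : SimpleGraph V} {u v x : V}

theorem exists_getVert_of_mem_support_take {p : G.Walk u v} {n : ℕ}
    (hx : x ∈ (p.take n).support) : ∃ m ≤ n, m ≤ p.length ∧ p.getVert m = x := by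
  obtain ⟨m, rfl, hm⟩ := mem_support_iff_exists_getVert.1 hx
  rw [take_length] at hm
  exact ⟨m, by omega, by omega, by rw [take_getVert, min_eq_right (by omega)]⟩

theorem exists_getVert_of_mem_support_drop {p : G.Walk u v} {n : ℕ} (hn : n ≤ p.length)
    (hx : x ∈ (p.drop n).support) : ∃ m, n ≤ m ∧ m ≤ p.length ∧ p.getVert m = x := by
  obtain ⟨m, rfl, hm⟩ := mem_support_iff_exists_getVert.1 hx
  rw [drop_length] at hm
  exact ⟨n + m, by omega, by omega, (drop_getVert p n m).symm⟩

theorem finite_setOf_isPath [Finite V] (u v : V) : {p : G.Walk u v | p.IsPath}.Finite := by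
  classical
  have := Fintype.ofFinite V
  exact (Set.finite_range fun p : G.Path u v => (p : G.Walk u v)).subset
    fun p hp => ⟨⟨p, hp⟩, rfl⟩

end SimpleGraph.Walk

open SimpleGraph Walk

theorem le_bcon [Finite V] {G : SimpleGraph V} {r : ℕ} {u : V} {ι : Type*} [Finite ι]
    {lt : V → V → Prop} (f : ι → (v : V) × G.Walk u v) (hf : ∀ i, IsQual G lt r (f i).2)
    (S : ι → Set V) (hS : Pairwise fun i j => Disjoint (S i) (S j))
    (hfS : ∀ i, ∀ t ∈ (f i).2.support, t = u ∨ t ∈ S i) :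
    Nat.card ι ≤ bcon G lt r u := by
  let e := (Finite.equivFin ι).symm
  have hdisj : Pairwise fun i j => ∀ t ∈ (f i).2.support, t ∈ (f j).2.support → t = u := by
    intro i j hij t hi hj
    rcases hfS i t hi with h | hi
    · exact h
    rcases hfS j t hj with h | hj
    · exact h
    exact absurd hj (Set.disjoint_left.1 (hS hij) hi)
  refine le_csSup ⟨Nat.card V, ?_⟩
    ⟨f ∘ e, fun i => hf (e i), fun i j hij => hdisj (e.injective.ne hij)⟩
  rintro n ⟨g, hg, hgd⟩
  have hinj : Function.Injective fun i => (g i).1 := by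
    intro i j hij
    by_contra hne
    refine (hg i).2.2.1 (hgd i j hne _ (g i).2.end_mem_support ?_)
    rw [show (g i).1 = (g j).1 from hij]
    exact (g j).2.end_mem_support
  simpa using Nat.card_le_card_of_injective _ hinj

section Admissibility

variable [σ : LinearOrder V] {G : SimpleGraph V} {r k : ℕ} {u v w x y : V}

namespace IsQual

variable {p : G.Walk u v}

theorem eq_of_mem_support (hp : IsQual G (· < ·) r p) (hx : x ∈ p.support) (hxu : x ≠ u)
    (hx' : ¬ x < u) : x = v :=
  by_contra fun hxv => hx' (hp.2.2.2.2 x hx hxu hxv)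

theorem getVert_le (hp : IsQual G (· < ·) r p) {i : ℕ} (hi : i < p.length) :
    p.getVert i ≤ u := by
  by_cases h0 : i = 0
  · simp [h0]
  · exact (hp.2.2.2.2 _ (p.getVert_mem_support i) ((hp.1.getVert_eq_start_iff hi.le).not.2 h0)
      ((hp.1.getVert_eq_end_iff hi.le).not.2 hi.ne)).le

theorem lt_length_of_getVert_eq {q : G.Walk u w} (hp : IsQual G (· < ·) r p)
    (hq : IsQual G (· < ·) r q) (hvw : v ≠ w) {i j : ℕ} (hi : i ≤ p.length)
    (h : p.getVert i = q.getVert j) : i < p.length := by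
  refine hi.lt_of_ne fun hil => hvw ?_
  rw [hil, getVert_length] at h
  exact hq.eq_of_mem_support (h ▸ q.getVert_mem_support j) hp.2.2.1 hp.2.2.2.1

end IsQual

theorem mem_reachSet_iff_s10 : v ∈ reachSet G σ r u ↔ ∃ p : G.Walk u v, IsQual G (· < ·) r p := by
  constructor
  · rintro ⟨huv, p, hp, hlen, hint⟩
    exact ⟨p, hp, hlen, ne_of_gt huv, lt_asymm huv, hint⟩
  · rintro ⟨p, hp, hlen, hvu, hv, hint⟩
    exact ⟨lt_of_le_of_ne (not_lt.1 hv) hvu.symm, p, hp, hlen, hint⟩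

theorem isQual_bypass [DecidableEq V] {p : G.Walk u v} (hlen : p.length ≤ r) (hvu : v ≠ u)
    (hv : ¬ v < u) (hint : ∀ x ∈ p.support, x ≠ u → x ≠ v → x < u) :
    IsQual G (· < ·) r p.bypass :=
  ⟨p.bypass_isPath, p.length_bypass_le_length.trans hlen, hvu, hv,
    fun x hx => hint x (p.support_bypass_subset_support hx)⟩

theorem SimpleGraph.Walk.IsPath.exists_isQual_take {p : G.Walk u v} (hp : p.IsPath)
    (hlen : p.length ≤ r) (hvu : v ≠ u) (hv : ¬ v < u) :
    ∃ i, 0 < i ∧ i ≤ p.length ∧ IsQual G (· < ·) r (p.take i) := by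
  classical
  have hpos : 0 < p.length := Nat.pos_of_ne_zero fun h => hvu (eq_of_length_eq_zero h).symm
  have hex : ∃ i, 0 < i ∧ ¬ p.getVert i < u := ⟨p.length, hpos, by rwa [getVert_length]⟩
  obtain ⟨hi0, hiu⟩ := Nat.find_spec hex
  have hil : Nat.find hex ≤ p.length := Nat.find_min' hex ⟨hpos, by rwa [getVert_length]⟩
  refine ⟨Nat.find hex, hi0, hil, hp.take _, by simp; omega,
    (hp.getVert_eq_start_iff hil).not.2 hi0.ne', hiu, fun x hx hxu hxi => ?_⟩
  obtain ⟨m, hmi, -, rfl⟩ := exists_getVert_of_mem_support_take hx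
  have hm0 : m ≠ 0 := by rintro rfl; simp at hxu
  have hmi' : m ≠ Nat.find hex := by rintro rfl; exact hxi rfl
  simpa [Nat.pos_of_ne_zero hm0] using Nat.find_min hex (lt_of_le_of_ne hmi hmi')

theorem SimpleGraph.Walk.IsPath.exists_isQual_support_subset {p : G.Walk u v} (hp : p.IsPath)
    (hlen : p.length ≤ r) (hvu : v ≠ u) (hv : ¬ v < u) :
    ∃ (z : V) (q : G.Walk u z), IsQual G (· < ·) r q ∧ q.support ⊆ p.support :=
  let ⟨i, _, _, hq⟩ := hp.exists_isQual_take hlen hvu hv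
  ⟨_, _, hq, (p.isSubwalk_take i).support_subset⟩

-- Otherwise `p` up to the common vertex, followed by `q` from there, would shortcut `q`.
theorem IsQual.le_of_getVert_eq {p : G.Walk u v} {q : G.Walk u w} (hp : IsQual G (· < ·) r p)
    (hq : IsQual G (· < ·) r q)
    (hqmin : ∀ q' : G.Walk u w, IsQual G (· < ·) r q' → q.length ≤ q'.length)
    {i j : ℕ} (hi : i ≤ p.length) (hj : j ≤ q.length) (h : p.getVert i = q.getVert j) :
    j ≤ i := by
  classical
  by_contra! hij
  let H := (p.take i).append ((q.drop j).copy h.symm rfl)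
  have hHlen : H.length = min i p.length + (q.length - j) := by
    simp only [H, length_append, take_length, length_copy, drop_length]
  have hH : IsQual G (· < ·) r H.bypass := by
    refine isQual_bypass ?_ hq.2.2.1 hq.2.2.2.1 fun x hx hxu hxw => ?_
    · have := hq.2.1
      omega
    rcases (mem_support_append_iff _ _).1 hx with hx | hx
    · obtain ⟨m, hmi, -, rfl⟩ := exists_getVert_of_mem_support_take hx
      rcases hmi.lt_or_eq with hmi | rfl
      · exact hp.2.2.2.2 _ (p.getVert_mem_support m) hxu
          ((hp.1.getVert_eq_end_iff (by omega)).not.2 (by omega))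
      · rw [h] at hxu hxw ⊢
        exact hq.2.2.2.2 _ (q.getVert_mem_support j) hxu hxw
    · rw [support_copy] at hx
      exact hq.2.2.2.2 x ((q.isSubwalk_drop j).support_subset hx) hxu hxw
  have := hqmin _ hH
  have := H.length_bypass_le_length
  omega

theorem IsQual.take_append_drop {p : G.Walk u v} {q : G.Walk u w} (hp : IsQual G (· < ·) r p)
    (hq : IsQual G (· < ·) r q) (hvw : v ≠ w)
    (hidx : ∀ m m', m ≤ q.length → m' ≤ p.length → q.getVert m = p.getVert m' → m = m')
    {i : ℕ} (hi : i ≤ p.length) (hi' : i ≤ q.length) (h : p.getVert i = q.getVert i) :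
    IsQual G (· < ·) r ((q.take i).append ((p.drop i).copy h rfl)) := by
  have hip : i < p.length := hp.lt_length_of_getVert_eq hq hvw hi h
  have hiq : i < q.length := hq.lt_length_of_getVert_eq hp hvw.symm hi' h.symm
  refine ⟨?_, ?_, hp.2.2.1, hp.2.2.2.1, fun x hx hxu hxv => ?_⟩
  · rw [isPath_def, support_append, support_copy, List.nodup_append]
    refine ⟨(hq.1.take i).support_nodup, (hp.1.drop i).support_nodup.tail, ?_⟩
    rintro _ ha _ hb rfl
    rw [drop_support_eq_support_drop_min, min_eq_left hi, List.tail_drop,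
      ← min_eq_left (show i + 1 ≤ p.length from hip), ← drop_support_eq_support_drop_min] at hb
    obtain ⟨m, hmi, hm, rfl⟩ := exists_getVert_of_mem_support_take ha
    obtain ⟨m', hm', hm'p, hmm'⟩ := exists_getVert_of_mem_support_drop hip hb
    have := hidx m m' hm hm'p hmm'.symm
    omega
  · simp only [length_append, take_length, length_copy, drop_length]
    have := hp.2.1
    omega
  · rcases (mem_support_append_iff _ _).1 hx with hx | hx
    · obtain ⟨m, hmi, hm, rfl⟩ := exists_getVert_of_mem_support_take hx
      exact hq.2.2.2.2 _ (q.getVert_mem_support m) hxu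
        ((hq.1.getVert_eq_end_iff hm).not.2 (by omega))
    · rw [support_copy] at hx
      exact hp.2.2.2.2 x ((p.isSubwalk_drop i).support_subset hx) hxu hxv

variable [Finite V]

theorem exists_isQual_forall_toLex_le (hv : v ∈ reachSet G σ r u) :
    ∃ p : G.Walk u v, IsQual G (· < ·) r p ∧ ∀ q : G.Walk u v, IsQual G (· < ·) r q →
      toLex (p.length, p.support) ≤ toLex (q.length, q.support) :=
  Set.exists_min_image {q : G.Walk u v | IsQual G (· < ·) r q}
    (fun q => toLex (q.length, q.support))
    ((finite_setOf_isPath u v).subset fun _ hq => hq.1) (mem_reachSet_iff_s10.1 hv)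

/-- A shortest qualifying path, and among those the one whose list of vertices is
lexicographically least. -/
noncomputable def canonPath (hv : v ∈ reachSet G σ r u) : G.Walk u v :=
  (exists_isQual_forall_toLex_le hv).choose

theorem isQual_canonPath (hv : v ∈ reachSet G σ r u) : IsQual G (· < ·) r (canonPath hv) :=
  (exists_isQual_forall_toLex_le hv).choose_spec.1

theorem length_canonPath_le (hv : v ∈ reachSet G σ r u) {q : G.Walk u v}
    (hq : IsQual G (· < ·) r q) : (canonPath hv).length ≤ q.length := by
  rcases Prod.Lex.toLex_le_toLex.1 ((exists_isQual_forall_toLex_le hv).choose_spec.2 q hq) with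
    h | h
  · exact h.le
  · exact h.1.le

theorem support_canonPath_le (hv : v ∈ reachSet G σ r u) {q : G.Walk u v}
    (hq : IsQual G (· < ·) r q) (hlen : q.length = (canonPath hv).length) :
    (canonPath hv).support ≤ q.support := by
  rcases Prod.Lex.toLex_le_toLex.1 ((exists_isQual_forall_toLex_le hv).choose_spec.2 q hq) with
    h | h
  · exact absurd hlen h.ne'
  · exact h.2

theorem index_eq_of_getVert_canonPath_eq (hv : v ∈ reachSet G σ r u)
    (hw : w ∈ reachSet G σ r u) {i j : ℕ} (hi : i ≤ (canonPath hv).length)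
    (hj : j ≤ (canonPath hw).length) (h : (canonPath hv).getVert i = (canonPath hw).getVert j) :
    i = j :=
  le_antisymm
    ((isQual_canonPath hw).le_of_getVert_eq (isQual_canonPath hv)
      (fun _ => length_canonPath_le hv) hj hi h.symm)
    ((isQual_canonPath hv).le_of_getVert_eq (isQual_canonPath hw)
      (fun _ => length_canonPath_le hw) hi hj h)

-- Otherwise the prefix of `canonPath hw` followed by the rest of `canonPath hv` would be a
-- lexicographically smaller qualifying path to `v` of the same length.
theorem not_support_take_canonPath_lt (hv : v ∈ reachSet G σ r u) (hw : w ∈ reachSet G σ r u)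
    (hvw : v ≠ w) {i : ℕ} (hi : i ≤ (canonPath hv).length) (hi' : i ≤ (canonPath hw).length)
    (h : (canonPath hv).getVert i = (canonPath hw).getVert i) :
    ¬ (canonPath hw).support.take (i + 1) < (canonPath hv).support.take (i + 1) := by
  intro hlt
  have hH := (isQual_canonPath hv).take_append_drop (isQual_canonPath hw) hvw
    (fun m m' hm hm' => index_eq_of_getVert_canonPath_eq hw hv hm hm') hi hi' h
  refine not_lt_of_ge (support_canonPath_le hv hH (by simp; omega)) ?_
  calc _ = (canonPath hw).support.take (i + 1) ++ (canonPath hv).support.drop (i + 1) := by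
        simp only [support_append, support_copy, support_take, drop_support_eq_support_drop_min,
          List.tail_drop, min_eq_left hi]
    _ < (canonPath hv).support.take (i + 1) ++ (canonPath hv).support.drop (i + 1) :=
      List.append_lt_append_of_length_eq hlt (by simp; omega) _
    _ = (canonPath hv).support := List.take_append_drop _ _

theorem getVert_canonPath_eq_of_getVert_eq (hv : v ∈ reachSet G σ r u)
    (hw : w ∈ reachSet G σ r u) {i j : ℕ} (hi : i ≤ (canonPath hv).length)
    (hj : j ≤ (canonPath hw).length) (h : (canonPath hv).getVert i = (canonPath hw).getVert j)
    {m : ℕ} (hm : m ≤ i) : (canonPath hv).getVert m = (canonPath hw).getVert m := by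
  obtain rfl := index_eq_of_getVert_canonPath_eq hv hw hi hj h
  rcases eq_or_ne v w with rfl | hvw
  · rfl
  have htake : (canonPath hv).support.take (i + 1) = (canonPath hw).support.take (i + 1) := by
    rcases lt_trichotomy ((canonPath hv).support.take (i + 1))
      ((canonPath hw).support.take (i + 1)) with hlt | heq | hgt
    · exact absurd hlt (not_support_take_canonPath_lt hw hv hvw.symm hj hi h.symm)
    · exact heq
    · exact absurd hgt (not_support_take_canonPath_lt hv hw hvw hi hj h)
  have hm' := congrArg (·[m]?) htake
  simp only [List.getElem?_take_of_lt (show m < i + 1 by omega)] at hm'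
  rw [getVert_eq_support_getElem _ (hm.trans hi), getVert_eq_support_getElem _ (hm.trans hj)]
  simpa [List.getElem?_eq_getElem, Nat.lt_succ_of_le (hm.trans hi),
    Nat.lt_succ_of_le (hm.trans hj)] using hm'

/-- The children of `x` in the tree formed by the canonical paths from `u`. -/
def succSet (G : SimpleGraph V) (r : ℕ) (u x : V) : Set V :=
  {y | ∃ (v : V) (hv : v ∈ reachSet G σ r u) (i : ℕ), i < (canonPath hv).length ∧
    (canonPath hv).getVert i = x ∧ (canonPath hv).getVert (i + 1) = y}

def subtree (G : SimpleGraph V) (r : ℕ) (u x y : V) : Set V :=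
  {t | ∃ (v : V) (hv : v ∈ reachSet G σ r u) (i m : ℕ), i < m ∧ m ≤ (canonPath hv).length ∧
    (canonPath hv).getVert i = x ∧ (canonPath hv).getVert (i + 1) = y ∧
    (canonPath hv).getVert m = t}

def ancestors (G : SimpleGraph V) (r : ℕ) (u x : V) : Set V :=
  {t | ∃ (v : V) (hv : v ∈ reachSet G σ r u) (i m : ℕ), m < i ∧ i ≤ (canonPath hv).length ∧
    (canonPath hv).getVert i = x ∧ (canonPath hv).getVert m = t}

theorem subtree_disjoint {y' : V} (hyy' : y ≠ y') :
    Disjoint (subtree G r u x y) (subtree G r u x y') := by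
  rw [Set.disjoint_left]
  rintro t ⟨v, hv, i, m, him, hm, rfl, rfl, rfl⟩ ⟨v', hv', i', m', him', hm', hx, rfl, ht⟩
  obtain rfl := index_eq_of_getVert_canonPath_eq hv hv' (by omega) (by omega) hx.symm
  exact hyy' (getVert_canonPath_eq_of_getVert_eq hv hv' hm hm' ht.symm him)

theorem ancestors_disjoint_subtree : Disjoint (ancestors G r u x) (subtree G r u x y) := by
  rw [Set.disjoint_left]
  rintro t ⟨v, hv, i, m, hmi, hi, rfl, rfl⟩ ⟨v', hv', i', m', him', hm', hx, -, ht⟩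
  have := index_eq_of_getVert_canonPath_eq hv hv' hi (by omega) hx.symm
  have := index_eq_of_getVert_canonPath_eq hv hv' (by omega) hm' ht.symm
  omega

theorem exists_isQual_subset_subtree (hy : y ∈ succSet G r u x) :
    ∃ (z : V) (q : G.Walk x z), IsQual G (· < ·) r q ∧
      ∀ t ∈ q.support, t = x ∨ t ∈ subtree G r u x y := by
  obtain ⟨v, hv, i, hi, rfl, rfl⟩ := hy
  have hP := isQual_canonPath hv
  have hxv : (canonPath hv).getVert i < v := (hP.getVert_le hi).trans_lt hv.1
  obtain ⟨z, q, hq, hsub⟩ := (hP.1.drop i).exists_isQual_support_subset (r := r)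
    (by simp only [drop_length]; have := hP.2.1; omega) (ne_of_gt hxv) (lt_asymm hxv)
  refine ⟨z, q, hq, fun t ht => ?_⟩
  obtain ⟨m, him, hm, rfl⟩ := exists_getVert_of_mem_support_drop hi.le (hsub ht)
  rcases him.eq_or_lt with rfl | him
  · exact Or.inl rfl
  · exact Or.inr ⟨v, hv, i, m, him, hm, rfl, rfl, rfl⟩

theorem exists_isQual_subset_ancestors (hxu : x ≠ u) (hy : y ∈ succSet G r u x) :
    ∃ (z : V) (q : G.Walk x z), IsQual G (· < ·) r q ∧
      ∀ t ∈ q.support, t = x ∨ t ∈ ancestors G r u x := by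
  obtain ⟨v, hv, i, hi, rfl, -⟩ := hy
  have hP := isQual_canonPath hv
  have hxu' : (canonPath hv).getVert i < u := lt_of_le_of_ne (hP.getVert_le hi) hxu
  obtain ⟨z, q, hq, hsub⟩ := (hP.1.take i).reverse.exists_isQual_support_subset (r := r)
    (by simp only [length_reverse, take_length]; have := hP.2.1; omega) hxu.symm (lt_asymm hxu')
  refine ⟨z, q, hq, fun t ht => ?_⟩
  have ht' := hsub ht
  rw [support_reverse, List.mem_reverse] at ht'
  obtain ⟨m, hmi, -, rfl⟩ := exists_getVert_of_mem_support_take ht'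
  rcases hmi.lt_or_eq with hmi | rfl
  · exact Or.inr ⟨v, hv, i, m, hmi, hi.le, rfl, rfl⟩
  · exact Or.inl rfl

theorem card_succSet_le_bcon (u x : V) : Nat.card (succSet G r u x) ≤ bcon G (· < ·) r x := by
  choose z q hq hsub using fun y : succSet G r u x => exists_isQual_subset_subtree y.2
  exact le_bcon (fun y => ⟨z y, q y⟩) hq (fun y => subtree G r u x y)
    (fun y y' h => subtree_disjoint (Subtype.coe_injective.ne h)) hsub

theorem card_succSet_lt_bcon (hxu : x ≠ u) (hne : (succSet G r u x).Nonempty) :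
    Nat.card (succSet G r u x) < bcon G (· < ·) r x := by
  choose z q hq hsub using fun y : succSet G r u x => exists_isQual_subset_subtree y.2
  obtain ⟨z₀, q₀, hq₀, hsub₀⟩ := exists_isQual_subset_ancestors hxu hne.some_mem
  have := le_bcon (fun o : Option (succSet G r u x) => o.elim ⟨z₀, q₀⟩ fun y => ⟨z y, q y⟩)
    (by rintro (_ | y); exacts [hq₀, hq y])
    (fun o => o.elim (ancestors G r u x) fun y => subtree G r u x y)
    (by
      rintro (_ | y) (_ | y') h
      exacts [absurd rfl h, ancestors_disjoint_subtree, ancestors_disjoint_subtree.symm,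
        subtree_disjoint fun e => h (congrArg some (Subtype.coe_injective e))])
    (by rintro (_ | y); exacts [hsub₀, hsub y])
  rwa [Finite.card_option, Nat.add_one_le_iff] at this
structure IsLabelling (G : SimpleGraph V) (r k : ℕ) (L : V → V → V → ℕ) : Prop where
  injOn (u x : V) : Set.InjOn (L u x) (succSet G r u x)
  lt (u x : V) : ∀ y ∈ succSet G r u x, L u x y < k
  lt_pred (u x : V) : x ≠ u → ∀ y ∈ succSet G r u x, L u x y < k - 1

theorem exists_isLabelling (hk : 2 ≤ k) (hbc : ∀ x, bcon G (· < ·) r x ≤ k) :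
    ∃ L, IsLabelling G r k L := by
  have hcard (u x : V) : (succSet G r u x).ncard ≤ if x = u then k else k - 1 := by
    rw [← Nat.card_coe_set_eq]
    split_ifs with hxu
    · subst hxu
      exact (card_succSet_le_bcon x x).trans (hbc x)
    · rcases (succSet G r u x).eq_empty_or_nonempty with h | h
      · simp [h]
      · have := card_succSet_lt_bcon hxu h
        have := hbc x
        omega
  choose L hinj hlt using fun u x => Set.exists_injOn_lt_of_ncard_le (hcard u x)
  refine ⟨L, hinj, fun u x y hy => (hlt u x y hy).trans_le ?_, fun u x hxu y hy => ?_⟩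
  · split_ifs <;> omega
  · simpa [hxu] using hlt u x y hy

noncomputable def labelWord (L : V → V → V → ℕ) (hv : v ∈ reachSet G σ r u) : List ℕ :=
  List.ofFn fun i : Fin (canonPath hv).length =>
    L u ((canonPath hv).getVert i) ((canonPath hv).getVert (i + 1))

section Labels

variable {L : V → V → V → ℕ}

@[simp]
theorem length_labelWord (hv : v ∈ reachSet G σ r u) :
    (labelWord L hv).length = (canonPath hv).length :=
  List.length_ofFn

theorem labelWord_ne_nil (hv : v ∈ reachSet G σ r u) : labelWord L hv ≠ [] := by
  rw [← List.length_pos_iff, length_labelWord, Nat.pos_iff_ne_zero]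
  exact fun h => (isQual_canonPath hv).2.2.1 (eq_of_length_eq_zero h).symm

theorem getVert_succ_mem_succSet (hv : v ∈ reachSet G σ r u) {i : ℕ}
    (hi : i < (canonPath hv).length) :
    (canonPath hv).getVert (i + 1) ∈ succSet G r u ((canonPath hv).getVert i) :=
  ⟨v, hv, i, hi, rfl, rfl⟩

theorem eq_of_labelWord_prefix (hL : ∀ x, Set.InjOn (L u x) (succSet G r u x))
    {hv : v ∈ reachSet G σ r u} {hw : w ∈ reachSet G σ r u}
    (h : labelWord L hv <+: labelWord L hw) : v = w := by
  obtain ⟨hlen, hget⟩ := List.prefix_iff_getElem.1 h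
  simp only [labelWord, List.length_ofFn, List.getElem_ofFn] at hlen hget
  have key : ∀ m ≤ (canonPath hv).length, (canonPath hv).getVert m = (canonPath hw).getVert m := by
    intro m hm
    induction m with
    | zero => simp
    | succ m ih =>
      have e := ih (by omega)
      refine hL _ (getVert_succ_mem_succSet hv (by omega))
        (e ▸ getVert_succ_mem_succSet hw (by omega)) ?_
      rw [hget m (by omega), e]
  have hvw := key _ le_rfl
  rw [getVert_length] at hvw
  exact (isQual_canonPath hw).eq_of_mem_support (hvw ▸ getVert_mem_support _ _) (ne_of_gt hv.1)
    (lt_asymm hv.1)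

theorem getD_labelWord_lt (hk : 2 ≤ k) (hL : IsLabelling G r k L) (hv : v ∈ reachSet G σ r u)
    (i : ℕ) : (labelWord L hv).getD i 0 < if i = 0 then k else k - 1 := by
  rcases lt_or_ge i (labelWord L hv).length with hi | hi
  · rw [List.getD_eq_getElem _ _ hi]
    simp only [labelWord, List.getElem_ofFn]
    rw [length_labelWord] at hi
    have hsucc := getVert_succ_mem_succSet hv hi
    by_cases h0 : i = 0
    · subst h0
      simpa using hL.lt u u _ (by simpa using hsucc)
    · simpa [h0] using hL.lt_pred u _
        (((isQual_canonPath hv).1.getVert_eq_start_iff hi.le).not.2 h0) _ hsucc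
  · rw [List.getD_eq_default _ _ hi]
    split_ifs <;> omega

theorem eq_of_getD_labelWord_eq (hL : ∀ x, Set.InjOn (L u x) (succSet G r u x))
    {hv : v ∈ reachSet G σ r u} {hw : w ∈ reachSet G σ r u}
    (h : ∀ i < r, (labelWord L hv).getD i 0 = (labelWord L hw).getD i 0) : v = w := by
  have hr : (labelWord L hv).length ≤ r := by simpa using (isQual_canonPath hv).2.1
  rcases List.prefix_or_prefix_of_getD_eq fun i hi => h i (by omega) with hp | hp
  exacts [eq_of_labelWord_prefix hL hp, (eq_of_labelWord_prefix hL hp).symm]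

theorem ncard_reachSet_le (hk : 2 ≤ k) (hbc : ∀ x, bcon G (· < ·) r x ≤ k) (u : V) :
    (reachSet G σ r u).ncard ≤ k * (k - 1) ^ (r - 1) := by
  obtain ⟨L, hL⟩ := exists_isLabelling hk hbc
  let c : Fin r → ℕ := fun i => if (i : ℕ) = 0 then k else k - 1
  let code {v : V} (hv : v ∈ reachSet G σ r u) : Fin r → ℕ := fun i => (labelWord L hv).getD i 0
  calc (reachSet G σ r u).ncard ≤ (Fintype.piFinset fun i => Finset.range (c i)).card := by
        refine Set.ncard_le_card_of_encoding _
          (fun f v => ∃ hv : v ∈ reachSet G σ r u, code hv = f) (fun v hv => ?_) ?_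
        · exact ⟨code hv, Fintype.mem_piFinset.2 fun i =>
            Finset.mem_range.2 (getD_labelWord_lt hk hL hv i), hv, rfl⟩
        · rintro _ v w ⟨hv, rfl⟩ ⟨hw, h⟩
          exact eq_of_getD_labelWord_eq (hL.injOn u) fun i hi => (congrFun h ⟨i, hi⟩).symm
    _ = ∏ i, c i := by simp [Fintype.card_piFinset]
    _ ≤ k * (k - 1) ^ (r - 1) := Fin.prod_ite_val_eq_zero_le k r (by omega)

inductive ChainCode (G : SimpleGraph V) (r : ℕ) (L : V → V → V → ℕ) : V → List ℕ → V → Prop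
  | nil (x : V) : ChainCode G r L x [] x
  | cons {x y v : V} {l : List ℕ} (hy : y ∈ reachSet G σ r x) :
      ChainCode G r L y l v → ChainCode G r L x (labelWord L hy ++ l) v

theorem chainCode_iff {l : List ℕ} :
    ChainCode G r L u l v ↔ (l = [] ∧ v = u) ∨
      ∃ (y : V) (hy : y ∈ reachSet G σ r u) (l' : List ℕ),
        l = labelWord L hy ++ l' ∧ ChainCode G r L y l' v := by
  constructor
  · rintro (_ | ⟨hy, h⟩)
    exacts [Or.inl ⟨rfl, rfl⟩, Or.inr ⟨_, hy, _, rfl, h⟩]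
  · rintro (⟨rfl, rfl⟩ | ⟨y, hy, l', rfl, h⟩)
    exacts [.nil _, .cons hy h]

theorem ChainCode.unique (hL : ∀ u x, Set.InjOn (L u x) (succSet G r u x)) {l : List ℕ}
    (h : ChainCode G r L u l v) (h' : ChainCode G r L u l w) : v = w := by
  induction h generalizing w with
  | nil x =>
    rcases chainCode_iff.1 h' with ⟨-, rfl⟩ | ⟨y, hy, l', he, -⟩
    · rfl
    · exact absurd (List.append_eq_nil_iff.1 he.symm).1 (labelWord_ne_nil hy)
  | @cons x y v l hy _ ih =>
    rcases chainCode_iff.1 h' with ⟨he, -⟩ | ⟨y', hy', l', he, h'⟩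
    · exact absurd (List.append_eq_nil_iff.1 he).1 (labelWord_ne_nil hy)
    obtain rfl : y = y' := by
      have hp' : labelWord L hy' <+: labelWord L hy ++ l := he ▸ List.prefix_append _ _
      rcases List.prefix_or_prefix_of_prefix (List.prefix_append _ _) hp' with hp | hp
      exacts [eq_of_labelWord_prefix (hL x) hp, (eq_of_labelWord_prefix (hL x) hp).symm]
    exact ih (List.append_cancel_left he ▸ h')

theorem ChainCode.lt (hL : IsLabelling G r k L) {l : List ℕ} (h : ChainCode G r L u l v) :
    ∀ a ∈ l, a < k := by
  induction h with
  | nil => simp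
  | @cons x y v l hy _ ih =>
    intro a ha
    rcases List.mem_append.1 ha with ha | ha
    · obtain ⟨i, rfl⟩ := List.mem_ofFn.1 ha
      exact hL.lt _ _ _ (getVert_succ_mem_succSet hy i.2)
    · exact ih a ha

-- Cut a path witnessing weak reachability at its first vertex above `u`: the first piece is
-- qualifying, and the rest witnesses weak reachability from that vertex.
theorem exists_chainCode (L : V → V → V → ℕ) {m : ℕ} (hm : m ≤ r)
    (hv : v ∈ wreachSet G σ m u) : ∃ l, ChainCode G r L u l v ∧ l.length ≤ m := by
  induction m using Nat.strong_induction_on generalizing u with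
  | _ m ih =>
  obtain ⟨huv, p, hp, hlen, hint⟩ := hv
  obtain ⟨i, hi0, hil, hq⟩ := hp.exists_isQual_take (hlen.trans hm) (ne_of_gt huv) (lt_asymm huv)
  obtain ⟨y, hyi, hy, hyl⟩ : ∃ y, p.getVert i = y ∧ ∃ hy : y ∈ reachSet G σ r u,
      (labelWord L hy).length ≤ i :=
    ⟨_, rfl, mem_reachSet_iff_s10.2 ⟨_, hq⟩, by
      simpa using (length_canonPath_le (mem_reachSet_iff_s10.2 ⟨_, hq⟩) hq).trans (by simp)⟩
  rcases hil.lt_or_eq with hil | rfl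
  · subst hyi
    have hyv : p.getVert i < v := hint _ (p.getVert_mem_support i)
      ((hp.getVert_eq_start_iff hil.le).not.2 hi0.ne') ((hp.getVert_eq_end_iff hil.le).not.2 hil.ne)
    have hv' : v ∈ wreachSet G σ (p.length - i) (p.getVert i) := by
      refine ⟨hyv, p.drop i, hp.drop i, by simp, fun x hx hxy hxv => ?_⟩
      refine hint x ((p.isSubwalk_drop i).support_subset hx) ?_ hxv
      rintro rfl
      obtain ⟨j, hij, hj, hju⟩ := exists_getVert_of_mem_support_drop hil.le hx
      have := (hp.getVert_eq_start_iff hj).1 hju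
      omega
    obtain ⟨l, hl, hll⟩ := ih (p.length - i) (by omega) (by omega) hv'
    exact ⟨_, .cons hy hl, by simp only [List.length_append]; omega⟩
  · rw [getVert_length] at hyi
    subst hyi
    exact ⟨_, .cons hy (.nil _), by simpa using hyl.trans hlen⟩

theorem ncard_wreachSet_le (hk : 2 ≤ k) (hbc : ∀ x, bcon G (· < ·) r x ≤ k) (u : V) :
    (wreachSet G σ r u).ncard ≤ ∑ i ∈ Finset.range (r + 1), k ^ i := by
  obtain ⟨L, hL⟩ := exists_isLabelling hk hbc
  obtain ⟨t, hts, htcard⟩ := List.exists_finset_of_length_le_of_forall_lt k r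
  refine (Set.ncard_le_card_of_encoding t (ChainCode G r L u) (fun v hv => ?_)
    fun _ _ _ => ChainCode.unique hL.injOn).trans htcard
  obtain ⟨l, hl, hlen⟩ := exists_chainCode L le_rfl hv
  exact ⟨l, hts l hlen (hl.lt hL), hl⟩

end Labels

end Admissibility

theorem exists_linearOrder_forall_bcon_le [Fintype V] {G : SimpleGraph V} {r k : ℕ}
    (h : admNum G r ≤ k) : ∃ σ : LinearOrder V, ∀ x, bcon G (olt σ) r x ≤ k := by
  have : Nonempty (LinearOrder V) :=
    ⟨LinearOrder.lift' _ (Fintype.equivFin V).injective⟩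
  obtain ⟨σ, hσ⟩ := Nat.sInf_mem
    (Set.range_nonempty fun σ : LinearOrder V => Finset.univ.sup fun u => bcon G (olt σ) r u)
  exact ⟨σ, fun x => (Finset.le_sup (Finset.mem_univ x)).trans (hσ.trans_le h)⟩

theorem adm_bounds_col_wcol [Fintype V] (G : SimpleGraph V) (r k : ℕ) (hk : 2 ≤ k)
    (hadm : admNum G r ≤ k) :
    colNum G r ≤ k * (k - 1) ^ (r - 1) ∧ wcolNum G r ≤ (k ^ (r + 1) - 1) / (k - 1) := by
  obtain ⟨σ, hσ⟩ := exists_linearOrder_forall_bcon_le hadm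
  rw [← Nat.geomSum_eq hk]
  exact ⟨(ciInf_le (OrderBot.bddBelow _) σ).trans
      (Finset.sup_le fun u _ => ncard_reachSet_le hk hσ u),
    (ciInf_le (OrderBot.bddBelow _) σ).trans
      (Finset.sup_le fun u _ => ncard_wreachSet_le hk hσ u)⟩
end

section
/- Let φ be a satisfiable instance of 2-Clause 3-SAT and let G(φ) be the graph obtained from φ by the following construction: for each clause c_i create 6 vertices u_i^1,…,u_i^6 (plus two extra vertices f_i, f'_i adjacent to all of u_i^1,…,u_i^6 if c_i has only 2 literals); for each variable x_j create adjacent vertices v_j and v'_j; and join v_j (resp. v'_j) to all of u_i^1,…,u_i^6 whenever x_j (resp. ¬x_j) appears in c_i. Then wcol_2(G(φ)) ≤ 5. -/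
open SimpleGraph

variable {V : Type*}

/-- An instance of 2-Clause 3-SAT: a CNF formula where every clause has at most 3
(distinct) variables, no clause repeats a variable, every clause has at least 2 literals
(single-literal clauses are assumed preprocessed), and each literal (a variable together
with a polarity) appears in exactly 2 clauses. -/
structure TC3SAT where
  n : ℕ
  m : ℕ
  clauses : Fin m → Finset (Fin n × Bool)
  vars_distinct : ∀ i, ∀ l ∈ clauses i, ∀ l' ∈ clauses i, l.1 = l'.1 → l = l'
  clause_le_three : ∀ i, (clauses i).card ≤ 3
  clause_ge_two : ∀ i, 2 ≤ (clauses i).card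
  lit_twice : ∀ l : Fin n × Bool, (Finset.univ.filter fun i => l ∈ clauses i).card = 2

/-- The assignment `A` satisfies the formula `φ`. -/
def TC3SAT.Sat (φ : TC3SAT) (A : Fin φ.n → Bool) : Prop :=
  ∀ i, ∃ l ∈ φ.clauses i, A l.1 = l.2

/-- The formula `φ` is satisfiable. -/
def TC3SAT.Satisfiable (φ : TC3SAT) : Prop := ∃ A, φ.Sat A

/-- Vertices of the weak-2-coloring-number reduction graph `G(φ)`:
six clause vertices per clause, two extra vertices `f_i`, `f'_i` for 2-literal clauses,
and a pair of literal vertices per variable (`v j true` is `v_j`, `v j false` is `v'_j`). -/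
inductive VtxW2 (φ : TC3SAT) where
  | u (i : Fin φ.m) (ℓ : Fin 6)
  | f (i : {i : Fin φ.m // (φ.clauses i).card = 2}) (b : Bool)
  | v (j : Fin φ.n) (b : Bool)
  deriving DecidableEq, Fintype

/-- Base relation of the reduction graph. -/
def relW2 (φ : TC3SAT) : VtxW2 φ → VtxW2 φ → Prop
  | .u i _, .f i' _ => i = i'.1
  | .u i _, .v j b => (j, b) ∈ φ.clauses i
  | .v j _, .v j' _ => j = j'
  | _, _ => False

/-- The reduction graph `G(φ)` for the weak 2-coloring number. -/
def GW2 (φ : TC3SAT) : SimpleGraph (VtxW2 φ) := SimpleGraph.fromRel (relW2 φ)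


/-! ### Auxiliary material for the main theorem -/

lemma wreach_two_cases {G : SimpleGraph V} (σ : LinearOrder V) {x v : V}
    (hv : v ∈ wreachSet G σ 2 x) :
    olt σ x v ∧ (G.Adj x v ∨ ∃ w, G.Adj x w ∧ G.Adj w v ∧ olt σ w v) := by
  obtain ⟨hlt, p, hp, hlen, hsupp⟩ := hv
  refine ⟨hlt, ?_⟩
  cases p with
  | nil => exact absurd hlt (by letI := σ; exact lt_irrefl x)
  | cons h q =>
    cases q with
    | nil => exact Or.inl h
    | cons h' q' =>
      cases q' with
      | nil => exact Or.inr ⟨_, h, h', hsupp _ (by simp) h.ne' h'.ne⟩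
      | cons h'' q'' => simp [SimpleGraph.Walk.length_cons] at hlen

/-- Rank function used to build the ordering witnessing `wcol₂ ≤ 5`. -/
def rnkW2 {φ : TC3SAT} (A : Fin φ.n → Bool) : VtxW2 φ → ℕ
  | .u _ _ => 0
  | .f _ _ => 1
  | .v j b => if A j = b then 3 else 2

/-- If the 2-Clause 3-SAT instance `φ` is satisfiable, then the reduction graph `G(φ)`
has weak 2-coloring number at most 5. -/
theorem sat_implies_wcol2_le_five (φ : TC3SAT) (hsat : φ.Satisfiable) :
    wcolNum (GW2 φ) 2 ≤ 5 := by
  classical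
  obtain ⟨A, hA⟩ := hsat
  set e := Fintype.equivFin (VtxW2 φ) with he
  set key : VtxW2 φ → ℕ ×ₗ ℕ := fun x => toLex (rnkW2 A x, (e x : ℕ)) with hkeydef
  have hinj : Function.Injective key := by
    intro a b h
    have h2 : ((e a : Fin _) : ℕ) = ((e b : Fin _) : ℕ) :=
      congrArg (fun p : ℕ ×ₗ ℕ => (ofLex p).2) h
    exact e.injective (Fin.val_injective h2)
  set σ : LinearOrder (VtxW2 φ) := LinearOrder.lift' key hinj with hσ
  have hkey : ∀ a b : VtxW2 φ, olt σ a b → key a < key b := fun a b h => h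
  have hrk : ∀ a b : VtxW2 φ, olt σ a b → rnkW2 A a ≤ rnkW2 A b := by
    intro a b h
    have h' := hkey a b h
    rw [Prod.Lex.lt_iff] at h'
    rcases h' with h' | ⟨h', _⟩
    · exact le_of_lt h'
    · exact le_of_eq h'
  have hirr : ∀ a : VtxW2 φ, ¬ olt σ a a := fun a => by letI := σ; exact lt_irrefl a
  have adjC : ∀ a b, (GW2 φ).Adj a b ↔ a ≠ b ∧ (relW2 φ a b ∨ relW2 φ b a) :=
    fun a b => SimpleGraph.fromRel_adj _ a b
  have bound : ∀ (x : VtxW2 φ) (S : Finset (VtxW2 φ)),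
      (wreachSet (GW2 φ) σ 2 x) ⊆ ↑S → S.card ≤ 5 →
      (wreachSet (GW2 φ) σ 2 x).ncard ≤ 5 := by
    intro x S hsub hcard
    calc (wreachSet (GW2 φ) σ 2 x).ncard ≤ (↑S : Set (VtxW2 φ)).ncard :=
          Set.ncard_le_ncard hsub (Set.toFinite _)
      _ = S.card := Set.ncard_coe_finset S
      _ ≤ 5 := hcard
  have key_le : wcolOrd (GW2 φ) σ 2 ≤ 5 := by
    unfold wcolOrd
    apply Finset.sup_le
    intro x _
    cases x with
    | u i ℓ =>
      obtain ⟨lt0, hlt0_mem, hlt0_true⟩ := hA i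
      refine bound _ ((((φ.clauses i).image fun l => VtxW2.v l.1 l.2) ∪
          (((φ.clauses i).filter fun l => A l.1 ≠ l.2).image fun l => VtxW2.v l.1 (!l.2))) ∪
          (if h2 : (φ.clauses i).card = 2 then
            {VtxW2.f ⟨i, h2⟩ true, VtxW2.f ⟨i, h2⟩ false} else ∅)) ?_ ?_
      · -- subset
        intro y hy
        obtain ⟨hlt2, hcase⟩ := wreach_two_cases σ hy
        refine Finset.mem_coe.mpr ?_
        rcases hcase with hadj | ⟨w, h1, h2w, hwv⟩
        · rw [adjC] at hadj
          obtain ⟨hne, hrel | hrel⟩ := hadj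
          · cases y with
            | u i2 ℓ2 => simp [relW2] at hrel
            | f i2 c2 =>
              simp only [relW2] at hrel
              have h2 : (φ.clauses i).card = 2 := by rw [hrel]; exact i2.2
              have hi2 : i2 = ⟨i, h2⟩ := Subtype.ext hrel.symm
              subst hi2
              refine Finset.mem_union_right _ ?_
              rw [dif_pos h2]
              cases c2 <;> simp
            | v j2 b2 =>
              simp only [relW2] at hrel
              exact Finset.mem_union_left _ (Finset.mem_union_left _
                (Finset.mem_image.mpr ⟨(j2, b2), hrel, rfl⟩))
          · cases y <;> simp [relW2] at hrel
        · rw [adjC] at h1 h2w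
          obtain ⟨hne1, hrel1⟩ := h1
          obtain ⟨hne2, hrel2⟩ := h2w
          cases w with
          | u i2 ℓ2 => simp [relW2] at hrel1
          | f i2 c2 =>
            -- y must be a u-vertex, contradiction with hwv via ranks
            cases y with
            | u i3 ℓ3 =>
              have := hrk _ _ hwv
              simp [rnkW2] at this
            | f i3 c3 => simp [relW2] at hrel2
            | v j3 b3 => simp [relW2] at hrel2
          | v j2 b2 =>
            have hmem2 : (j2, b2) ∈ φ.clauses i := by
              rcases hrel1 with h | h <;> simp only [relW2] at h
              · exact h
            cases y with
            | u i3 ℓ3 =>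
              have := hrk _ _ hwv
              by_cases hA2 : A j2 = b2 <;> simp [rnkW2, hA2] at this
            | f i3 c3 => rcases hrel2 with h | h <;> simp [relW2] at h
            | v j3 b3 =>
              have hj : j2 = j3 := by
                rcases hrel2 with h | h <;> simp only [relW2] at h
                · exact h
                · exact h.symm
              subst hj
              have hb : b3 = !b2 := by
                cases b2 <;> cases b3 <;> simp_all
              subst hb
              have hAr := hrk _ _ hwv
              by_cases hA2 : A j2 = b2
              · simp [rnkW2, hA2] at hAr
              · refine Finset.mem_union_left _ (Finset.mem_union_right _
                  (Finset.mem_image.mpr ⟨(j2, b2), Finset.mem_filter.mpr ⟨hmem2, hA2⟩, rfl⟩))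
      · -- cardinality
        have c1 : ((φ.clauses i).image fun l => VtxW2.v l.1 l.2).card ≤ (φ.clauses i).card :=
          Finset.card_image_le
        have c2 : (((φ.clauses i).filter fun l => A l.1 ≠ l.2).image
            fun l => VtxW2.v l.1 (!l.2)).card < (φ.clauses i).card :=
          lt_of_le_of_lt Finset.card_image_le
            (Finset.card_lt_card (Finset.filter_ssubset.2 ⟨lt0, hlt0_mem, not_ne_iff.2 hlt0_true⟩))
        have h3 := φ.clause_le_three i
        have hge := φ.clause_ge_two i
        refine le_trans (Finset.card_union_le _ _) ?_
        have c4 := Finset.card_union_le ((φ.clauses i).image fun l => VtxW2.v l.1 l.2)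
          (((φ.clauses i).filter fun l => A l.1 ≠ l.2).image fun l => VtxW2.v l.1 (!l.2))
        by_cases h2 : (φ.clauses i).card = 2
        · rw [dif_pos h2]
          have hp : ({VtxW2.f ⟨i, h2⟩ true, VtxW2.f ⟨i, h2⟩ false} :
              Finset (VtxW2 φ)).card ≤ 2 :=
            le_trans (Finset.card_insert_le _ _) (by simp)
          omega
        · rw [dif_neg h2]
          simp only [Finset.card_empty]
          omega
    | f i' c =>
      refine bound _ (((φ.clauses i'.1).image fun l => VtxW2.v l.1 l.2) ∪
        {VtxW2.f i' (!c)}) ?_ ?_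
      · intro y hy
        obtain ⟨hlt2, hcase⟩ := wreach_two_cases σ hy
        refine Finset.mem_coe.mpr ?_
        rcases hcase with hadj | ⟨w, h1, h2w, hwv⟩
        · rw [adjC] at hadj
          obtain ⟨hne, hrel | hrel⟩ := hadj
          · cases y <;> simp [relW2] at hrel
          · cases y with
            | u i3 ℓ3 =>
              have := hrk _ _ hlt2
              simp [rnkW2] at this
            | f i3 c3 => simp [relW2] at hrel
            | v j3 b3 => simp [relW2] at hrel
        · rw [adjC] at h1 h2w
          obtain ⟨hne1, hrel1⟩ := h1
          obtain ⟨hne2, hrel2⟩ := h2w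
          cases w with
          | u i2 ℓ2 =>
            have hi2 : i2 = i'.1 := by
              rcases hrel1 with h | h <;> simp only [relW2] at h
              · exact h
            subst hi2
            cases y with
            | u i3 ℓ3 => rcases hrel2 with h | h <;> simp [relW2] at h
            | f i3 c3 =>
              have hi3 : i3 = i' := by
                rcases hrel2 with h | h <;> simp only [relW2] at h
                · exact Subtype.ext h.symm
              subst hi3
              have hc3 : c3 = !c := by
                by_contra hcc
                have : c3 = c := by cases c <;> cases c3 <;> simp_all
                subst this
                exact hirr _ hlt2
              subst hc3
              exact Finset.mem_union_right _ (Finset.mem_singleton_self _)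
            | v j3 b3 =>
              have hmem3 : (j3, b3) ∈ φ.clauses i'.1 := by
                rcases hrel2 with h | h <;> simp only [relW2] at h
                · exact h
              exact Finset.mem_union_left _ (Finset.mem_image.mpr ⟨(j3, b3), hmem3, rfl⟩)
          | f i2 c2 => rcases hrel1 with h | h <;> simp [relW2] at h
          | v j2 b2 => rcases hrel1 with h | h <;> simp [relW2] at h
      · refine le_trans (Finset.card_union_le _ _) ?_
        have c1 : ((φ.clauses i'.1).image fun l => VtxW2.v l.1 l.2).card ≤ 2 :=
          le_trans Finset.card_image_le (le_of_eq i'.2)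
        have : ({VtxW2.f i' (!c)} : Finset (VtxW2 φ)).card = 1 := Finset.card_singleton _
        omega
    | v j b =>
      refine bound _ ((if A j = b then (∅ : Finset (VtxW2 φ)) else {VtxW2.v j (!b)}) ∪
        (Finset.univ.filter fun i => (j, b) ∈ φ.clauses i).biUnion
          (fun i => ((φ.clauses i).erase (j, b)).image fun l => VtxW2.v l.1 l.2)) ?_ ?_
      · intro y hy
        obtain ⟨hlt2, hcase⟩ := wreach_two_cases σ hy
        refine Finset.mem_coe.mpr ?_
        rcases hcase with hadj | ⟨w, h1, h2w, hwv⟩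
        · rw [adjC] at hadj
          obtain ⟨hne, hrel⟩ := hadj
          cases y with
          | u i3 ℓ3 =>
            have := hrk _ _ hlt2
            by_cases hA2 : A j = b <;> simp [rnkW2, hA2] at this
          | f i3 c3 => rcases hrel with h | h <;> simp [relW2] at h
          | v j3 b3 =>
            have hj : j = j3 := by
              rcases hrel with h | h <;> simp only [relW2] at h
              · exact h
              · exact h.symm
            subst hj
            have hb : b3 = !b := by cases b <;> cases b3 <;> simp_all
            subst hb
            have hAr := hrk _ _ hlt2
            have hAb : ¬ A j = b := by
              intro hA2
              simp [rnkW2, hA2] at hAr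
            refine Finset.mem_union_left _ ?_
            rw [if_neg hAb]
            exact Finset.mem_singleton_self _
        · rw [adjC] at h1 h2w
          obtain ⟨hne1, hrel1⟩ := h1
          obtain ⟨hne2, hrel2⟩ := h2w
          cases w with
          | u i2 ℓ2 =>
            have hmem2 : (j, b) ∈ φ.clauses i2 := by
              rcases hrel1 with h | h <;> simp only [relW2] at h
              · exact h
            cases y with
            | u i3 ℓ3 => rcases hrel2 with h | h <;> simp [relW2] at h
            | f i3 c3 =>
              have := hrk _ _ hlt2
              by_cases hA2 : A j = b <;> simp [rnkW2, hA2] at this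
            | v j3 b3 =>
              have hmem3 : (j3, b3) ∈ φ.clauses i2 := by
                rcases hrel2 with h | h <;> simp only [relW2] at h
                · exact h
              by_cases hpair : (j3, b3) = (j, b)
              · exfalso
                rw [Prod.mk.injEq] at hpair
                obtain ⟨hj3, hb3⟩ := hpair
                subst hj3; subst hb3
                exact hirr _ hlt2
              · refine Finset.mem_union_right _ (Finset.mem_biUnion.mpr
                  ⟨i2, Finset.mem_filter.mpr ⟨Finset.mem_univ _, hmem2⟩,
                    Finset.mem_image.mpr ⟨(j3, b3), Finset.mem_erase.mpr ⟨hpair, hmem3⟩, rfl⟩⟩)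
          | f i2 c2 => rcases hrel1 with h | h <;> simp [relW2] at h
          | v j2 b2 =>
            have hj2 : j = j2 := by
              rcases hrel1 with h | h <;> simp only [relW2] at h
              · exact h
              · exact h.symm
            subst hj2
            cases y with
            | u i3 ℓ3 =>
              have := hrk _ _ hlt2
              by_cases hA2 : A j = b <;> simp [rnkW2, hA2] at this
            | f i3 c3 => rcases hrel2 with h | h <;> simp [relW2] at h
            | v j3 b3 =>
              exfalso
              have hj3 : j = j3 := by
                rcases hrel2 with h | h <;> simp only [relW2] at h
                · exact h
                · exact h.symm
              subst hj3
              have hb2 : b2 = !b := by cases b <;> cases b2 <;> simp_all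
              subst hb2
              have hb3 : b3 = b := by cases b <;> cases b3 <;> simp_all
              subst hb3
              exact hirr _ hlt2
      · refine le_trans (Finset.card_union_le _ _) ?_
        have c1 : (if A j = b then (∅ : Finset (VtxW2 φ)) else {VtxW2.v j (!b)}).card ≤ 1 := by
          split <;> simp
        have c2 : ((Finset.univ.filter fun i => (j, b) ∈ φ.clauses i).biUnion
            (fun i => ((φ.clauses i).erase (j, b)).image fun l => VtxW2.v l.1 l.2)).card ≤
            (Finset.univ.filter fun i => (j, b) ∈ φ.clauses i).card * 2 := by
          refine Finset.card_biUnion_le_card_mul _ _ _ ?_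
          intro i hi
          refine le_trans Finset.card_image_le ?_
          have hmem : (j, b) ∈ φ.clauses i := (Finset.mem_filter.mp hi).2
          have := φ.clause_le_three i
          have := Finset.card_erase_of_mem hmem
          omega
        have c3 : (Finset.univ.filter fun i => (j, b) ∈ φ.clauses i).card = 2 :=
          φ.lit_twice (j, b)
        omega
  have step : wcolNum (GW2 φ) 2 ≤ wcolOrd (GW2 φ) σ 2 := by
    unfold wcolNum
    exact ciInf_le (OrderBot.bddBelow _) σ
  exact le_trans step key_le
end

section
/- Let φ be an instance of 2-Clause 3-SAT and G(φ) the graph of the wcol_2 reduction (clause gadgets u_i^1,…,u_i^6 with optional f_i, f'_i, literal pairs v_j v'_j, and edges from literal vertices to all six clause vertices of clauses containing them). If wcol_2(G(φ)) ≤ 5 then φ is satisfiable; the assignment setting x_j false when v_j <_σ v'_j and true otherwise (for a witnessing order σ) satisfies φ. -/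
open SimpleGraph

variable {V : Type*}

/-! Fix an order `σ` with `wcol_2(G_σ) ≤ 5` and suppose the clause `c_i` is falsified, i.e.
`v_j^b <_σ v_j^{¬b}` for every literal `(x_j, b)` of `c_i`. Some gadget vertex `u_i^ℓ` precedes
all common neighbours of the gadget, since otherwise all six gadget vertices are weakly
2-reachable from the least of those neighbours. From `u_i^ℓ` one then weakly 2-reaches both
literal vertices of every variable of `c_i` (the complementary one through the falsified one),
and also `f_i, f'_i` when `c_i` has two literals: six vertices in either case. -/

section WeakReach

variable {G : SimpleGraph V} {σ : LinearOrder V} {r : ℕ}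

lemma mem_wreachSet_of_adj (hr : 1 ≤ r) {u v : V} (huv : G.Adj u v) (hlt : olt σ u v) :
    v ∈ wreachSet G σ r u := by
  refine ⟨hlt, huv.toWalk, by simp [huv.ne], by simpa using hr, ?_⟩
  intro w hw hwu hwv
  simp only [Walk.support_cons, Walk.support_nil, List.mem_cons, List.not_mem_nil,
    or_false] at hw
  tauto

lemma mem_wreachSet_of_adj_of_adj (hr : 2 ≤ r) {u w v : V} (huw : G.Adj u w) (hwv : G.Adj w v)
    (hu : olt σ u v) (hw : olt σ w v) : v ∈ wreachSet G σ r u := by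
  have huv : u ≠ v := @ne_of_lt _ σ.toPreorder _ _ hu
  refine ⟨hu, .cons huw hwv.toWalk, ?_, by simpa using hr, ?_⟩
  · simp [Walk.cons_isPath_iff, huw.ne, hwv.ne, huv]
  · intro x hx hxu hxv
    simp only [Walk.support_cons, Walk.support_nil, List.mem_cons, List.not_mem_nil,
      or_false] at hx
    rcases hx with rfl | rfl | rfl <;> tauto

lemma card_le_wcolOrd_of_subset [Fintype V] {u : V} {s : Finset V}
    (hs : ↑s ⊆ wreachSet G σ r u) : s.card ≤ wcolOrd G σ r :=
  calc s.card = (s : Set V).ncard := (Set.ncard_coe_finset s).symm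
    _ ≤ (wreachSet G σ r u).ncard := Set.ncard_le_ncard hs (Set.toFinite _)
    _ ≤ wcolOrd G σ r :=
      Finset.le_sup (f := fun u => (wreachSet G σ r u).ncard) (Finset.mem_univ u)

lemma exists_forall_olt_of_wcolOrd_lt [Fintype V] (hr : 1 ≤ r) {s N : Finset V}
    (hs : wcolOrd G σ r < s.card) (hN : N.Nonempty) (hadj : ∀ n ∈ N, ∀ x ∈ s, G.Adj n x) :
    ∃ x ∈ s, ∀ n ∈ N, olt σ x n := by
  let _ := σ
  by_contra! hfar
  have hreach : ↑s ⊆ wreachSet G σ r (N.min' hN) := by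
    intro x hx
    obtain ⟨n, hn, hxn⟩ := hfar x hx
    have hnx : n < x := lt_of_le_of_ne (not_lt.mp hxn) (hadj n hn x hx).ne
    exact mem_wreachSet_of_adj hr (hadj _ (N.min'_mem hN) x hx)
      (lt_of_le_of_lt (N.min'_le n hn) hnx)
  exact (card_le_wcolOrd_of_subset hreach).not_gt hs

lemma exists_wcolOrd_eq_wcolNum [Fintype V] (G : SimpleGraph V) (r : ℕ) :
    ∃ σ : LinearOrder V, wcolOrd G σ r = wcolNum G r :=
  haveI : Nonempty (LinearOrder V) :=
    ⟨LinearOrder.lift' (Fintype.equivFin V) (Fintype.equivFin V).injective⟩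
  ciInf_mem fun σ : LinearOrder V => wcolOrd G σ r

end WeakReach

lemma lt_not_of_not_decide_lt_ne {α : Type*} [LinearOrder α] {p : Bool → α}
    (hp : p true ≠ p false) {b : Bool} (h : (!decide (p true < p false)) ≠ b) : p b < p !b := by
  cases b <;> simp_all [lt_of_le_of_ne, hp.symm]

namespace GW2

variable {φ : TC3SAT}

lemma adj_u_v {i : Fin φ.m} {ℓ : Fin 6} {j : Fin φ.n} {b : Bool}
    (h : (j, b) ∈ φ.clauses i) : (GW2 φ).Adj (.u i ℓ) (.v j b) :=
  (fromRel_adj _ _ _).mpr ⟨by simp, Or.inl h⟩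

lemma adj_v_v {j : Fin φ.n} {b b' : Bool} (h : b ≠ b') : (GW2 φ).Adj (.v j b) (.v j b') :=
  (fromRel_adj _ _ _).mpr ⟨by simp [h], Or.inl rfl⟩

lemma adj_u_f {i : Fin φ.m} {ℓ : Fin 6} (hi : (φ.clauses i).card = 2) (b : Bool) :
    (GW2 φ).Adj (.u i ℓ) (.f ⟨i, hi⟩ b) :=
  (fromRel_adj _ _ _).mpr ⟨by simp, Or.inl rfl⟩

end GW2

def clauseLitVerts (φ : TC3SAT) (i : Fin φ.m) : Finset (VtxW2 φ) :=
  ((φ.clauses i).image Prod.fst ×ˢ Finset.univ).image fun p => .v p.1 p.2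

section Clause

variable {φ : TC3SAT} {σ : LinearOrder (VtxW2 φ)}

lemma card_clauseLitVerts (i : Fin φ.m) :
    (clauseLitVerts φ i).card = 2 * (φ.clauses i).card := by
  have hvars : ((φ.clauses i).image Prod.fst).card = (φ.clauses i).card :=
    Finset.card_image_of_injOn fun l hl l' hl' => φ.vars_distinct i l hl l' hl'
  have hinj : Function.Injective fun p : Fin φ.n × Bool => VtxW2.v (φ := φ) p.1 p.2 :=
    fun ⟨_, _⟩ ⟨_, _⟩ h => by cases h; rfl
  rw [clauseLitVerts, Finset.card_image_of_injective _ hinj, Finset.card_product, hvars,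
    Finset.card_univ, Fintype.card_bool, mul_comm]

lemma clauseLitVerts_subset_wreachSet {i : Fin φ.m} {ℓ : Fin 6}
    (hlow : ∀ l ∈ φ.clauses i, olt σ (.u i ℓ) (.v l.1 l.2))
    (hfalse : ∀ l ∈ φ.clauses i, olt σ (.v l.1 l.2) (.v l.1 !l.2)) :
    ↑(clauseLitVerts φ i) ⊆ wreachSet (GW2 φ) σ 2 (.u i ℓ) := by
  intro x hx
  simp only [clauseLitVerts, Finset.coe_image, Finset.coe_product, Finset.coe_univ,
    Set.mem_image, Set.mem_prod, Finset.mem_coe, Set.mem_univ, and_true, Prod.exists,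
    exists_and_right, exists_eq_right] at hx
  obtain ⟨j, β, ⟨b, hl⟩, rfl⟩ := hx
  obtain rfl | rfl := (Bool.eq_or_eq_not β b)
  · exact mem_wreachSet_of_adj one_le_two (GW2.adj_u_v hl) (hlow _ hl)
  · exact mem_wreachSet_of_adj_of_adj le_rfl (GW2.adj_u_v hl) (GW2.adj_v_v (by simp))
      (@lt_trans _ σ.toPreorder _ _ _ (hlow _ hl) (hfalse _ hl)) (hfalse _ hl)

lemma exists_clause_vertex_olt_common_neighbors (h : wcolOrd (GW2 φ) σ 2 ≤ 5) (i : Fin φ.m) :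
    ∃ ℓ : Fin 6, ∀ x, (∀ ℓ', (GW2 φ).Adj x (.u i ℓ')) → olt σ (.u i ℓ) x := by
  classical
  obtain ⟨l, hl⟩ : (φ.clauses i).Nonempty :=
    Finset.card_pos.mp (lt_of_lt_of_le two_pos (φ.clause_ge_two i))
  have hgadget : (Finset.univ.image (VtxW2.u i)).card = 6 := by
    rw [Finset.card_image_of_injective _ fun _ _ h => by cases h; rfl]; rfl
  obtain ⟨_, hx, hlow⟩ := exists_forall_olt_of_wcolOrd_lt (G := GW2 φ) (σ := σ) one_le_two
    (s := Finset.univ.image (VtxW2.u i))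
    (N := Finset.univ.filter fun x => ∀ ℓ, (GW2 φ).Adj x (.u i ℓ))
    (by omega) ⟨.v l.1 l.2, by simpa using fun ℓ => (GW2.adj_u_v hl).symm⟩
    fun n hn x hx => by
      obtain ⟨ℓ, -, rfl⟩ := Finset.mem_image.mp hx
      exact (Finset.mem_filter.mp hn).2 ℓ
  obtain ⟨ℓ, -, rfl⟩ := Finset.mem_image.mp hx
  exact ⟨ℓ, fun x hx => hlow x (by simpa using hx)⟩

lemma sat_of_wcolOrd_le_five (h : wcolOrd (GW2 φ) σ 2 ≤ 5) :
    φ.Sat fun j =>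
      !(@decide (σ.lt (VtxW2.v j true) (VtxW2.v j false)) (σ.toDecidableLT _ _)) := by
  intro i
  by_contra! hunsat
  have hfalse : ∀ l ∈ φ.clauses i, olt σ (.v l.1 l.2) (.v l.1 !l.2) := fun l hl =>
    @lt_not_of_not_decide_lt_ne _ σ (fun b => .v l.1 b) (by simp) _ (hunsat l hl)
  obtain ⟨ℓ, hlow⟩ := exists_clause_vertex_olt_common_neighbors h i
  have hreach := clauseLitVerts_subset_wreachSet
    (fun l hl => hlow _ fun _ => (GW2.adj_u_v hl).symm) hfalse
  have hlits := card_clauseLitVerts (φ := φ) i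
  obtain hi | hi : (φ.clauses i).card = 2 ∨ (φ.clauses i).card = 3 := by
    have := φ.clause_le_three i; have := φ.clause_ge_two i; omega
  · have hf : ∀ b, VtxW2.f ⟨i, hi⟩ b ∈ wreachSet (GW2 φ) σ 2 (.u i ℓ) := fun b =>
      mem_wreachSet_of_adj one_le_two (GW2.adj_u_f hi b)
        (hlow _ fun _ => (GW2.adj_u_f hi b).symm)
    have hsub : ↑(insert (VtxW2.f ⟨i, hi⟩ true) (insert (.f ⟨i, hi⟩ false)
        (clauseLitVerts φ i))) ⊆ wreachSet (GW2 φ) σ 2 (.u i ℓ) := by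
      simpa [Set.insert_subset_iff, hf] using hreach
    have := card_le_wcolOrd_of_subset hsub
    rw [Finset.card_insert_of_notMem (by simp [clauseLitVerts]),
      Finset.card_insert_of_notMem (by simp [clauseLitVerts])] at this
    omega
  · have := card_le_wcolOrd_of_subset hreach
    omega

end Clause

/-- If the reduction graph `G(φ)` has weak 2-coloring number at most 5, then `φ` is
satisfiable; moreover, for any witnessing order `σ`, the assignment setting `x_j` false
when `v_j <_σ v'_j` and true otherwise satisfies `φ`. -/
theorem wcol2_le_five_implies_sat (φ : TC3SAT) (h : wcolNum (GW2 φ) 2 ≤ 5) :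
    φ.Satisfiable ∧
      ∀ σ : LinearOrder (VtxW2 φ), wcolOrd (GW2 φ) σ 2 ≤ 5 →
        φ.Sat fun j =>
          !(@decide (σ.lt (VtxW2.v j true) (VtxW2.v j false)) (σ.toDecidableLT _ _)) := by
  obtain ⟨σ, hσ⟩ := exists_wcolOrd_eq_wcolNum (GW2 φ) 2
  exact ⟨⟨_, sat_of_wcolOrd_le_five (hσ.trans_le h)⟩, fun _ => sat_of_wcolOrd_le_five⟩
end

section
/- Fix r ≥ 3. Let φ be a satisfiable instance of Exact r-SAT and let G(φ) be the graph with 2r clause vertices u_i^1,…,u_i^{2r} per clause c_i, adjacent literal-pair vertices v_j, v'_j per variable x_j, and, for each occurrence of literal x_j (resp. ¬x_j) in clause c_i, two internally disjoint paths of length r−1 (i.e., two (r−2)-subdivided edges) from v_j (resp. v'_j) to each of u_i^1,…,u_i^{2r}. Then wcol_r(G(φ)) ≤ 2r−1. -/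
open SimpleGraph

variable {V : Type*}

/-- An instance of Exact r-SAT: a CNF formula where every clause contains exactly `r`
distinct variables (and no clause repeats a variable). -/
structure ExactSAT (r : ℕ) where
  n : ℕ
  m : ℕ
  clauses : Fin m → Finset (Fin n × Bool)
  vars_distinct : ∀ i, ∀ l ∈ clauses i, ∀ l' ∈ clauses i, l.1 = l'.1 → l = l'
  clause_card : ∀ i, (clauses i).card = r

/-- The assignment `A` satisfies the formula `φ`. -/
def ExactSAT.Sat {r : ℕ} (φ : ExactSAT r) (A : Fin φ.n → Bool) : Prop :=
  ∀ i, ∃ l ∈ φ.clauses i, A l.1 = l.2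

/-- The formula `φ` is satisfiable. -/
def ExactSAT.Satisfiable {r : ℕ} (φ : ExactSAT r) : Prop := ∃ A, φ.Sat A

/-- Vertices of the weak-`r`-coloring-number reduction graph `G(φ)`:
`2r` clause vertices `u i ℓ` per clause, a pair of literal vertices per variable
(`v j true` is `v_j`, `v j false` is `v'_j`), and subdivision vertices
`s occ ℓ c t`: for each occurrence `occ` of a literal in a clause, each of the `2r`
clause vertices `ℓ`, each of the two copies `c : Fin 2` of the subdivided edge,
the `t`-th of its `r - 2` internal vertices. -/
inductive VtxWR (r : ℕ) (φ : ExactSAT r) where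
  | u (i : Fin φ.m) (ℓ : Fin (2 * r))
  | v (j : Fin φ.n) (b : Bool)
  | s (occ : Σ i : Fin φ.m, {l : Fin φ.n × Bool // l ∈ φ.clauses i})
      (ℓ : Fin (2 * r)) (c : Fin 2) (t : Fin (r - 2))
  deriving DecidableEq, Fintype

/-- Base relation of the reduction graph: `v_j v'_j` edges, and for each literal
occurrence two `(r-2)`-subdivided edges between the literal vertex and each clause
vertex, realized as paths `v — s 0 — ⋯ — s (r-3) — u`. -/
def relWR (r : ℕ) (φ : ExactSAT r) : VtxWR r φ → VtxWR r φ → Prop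
  | .v j _, .v j' _ => j = j'
  | .v j b, .s occ _ _ t => occ.2.1 = (j, b) ∧ (t : ℕ) = 0
  | .s occ ℓ c t, .s occ' ℓ' c' t' => occ = occ' ∧ ℓ = ℓ' ∧ c = c' ∧ (t' : ℕ) = (t : ℕ) + 1
  | .s occ ℓ _ t, .u i ℓ' => occ.1 = i ∧ ℓ = ℓ' ∧ (t : ℕ) + 1 = r - 2
  | _, _ => False

/-- The reduction graph `G(φ)` for the weak `r`-coloring number. -/
def GWR (r : ℕ) (φ : ExactSAT r) : SimpleGraph (VtxWR r φ) := SimpleGraph.fromRel (relWR r φ)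

namespace WCR

variable {r : ℕ} {φ : ExactSAT r}

/-- Rank of a vertex: subdivision vertices lowest (by depth), then clause vertices,
then false-literal vertices, then true-literal vertices. -/
def rnk (A : Fin φ.n → Bool) : VtxWR r φ → ℕ
  | .u _ _ => r
  | .v j b => if A j = b then r + 2 else r + 1
  | .s _ _ _ t => (t : ℕ)

@[simp] lemma rnk_u (A : Fin φ.n → Bool) (i : Fin φ.m) (ℓ : Fin (2 * r)) :
    rnk A (.u i ℓ) = r := rfl

@[simp] lemma rnk_s (A : Fin φ.n → Bool) (occ) (ℓ : Fin (2 * r)) (c : Fin 2)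
    (t : Fin (r - 2)) : rnk A (.s occ ℓ c t) = (t : ℕ) := rfl

lemma rnk_v_ge (A : Fin φ.n → Bool) (j : Fin φ.n) (b : Bool) :
    r + 1 ≤ rnk A (.v j b) := by
  by_cases h : A j = b <;> simp [rnk, h]

lemma rnk_v_true (A : Fin φ.n → Bool) {j : Fin φ.n} {b : Bool} (h : A j = b) :
    rnk A (.v j b) = r + 2 := by simp [rnk, h]

lemma rnk_v_false (A : Fin φ.n → Bool) {j : Fin φ.n} {b : Bool} (h : A j ≠ b) :
    rnk A (.v j b) = r + 1 := by simp [rnk, h]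

/-- The reachability invariant: `Inv A k a v` overapproximates the vertices `v`
reachable from `a` by a walk of length `≤ k` all of whose vertices other than `v`
have rank at most `rnk A v`. -/
def Inv (A : Fin φ.n → Bool) (k : ℕ) : VtxWR r φ → VtxWR r φ → Prop
  | .u i ℓ, v =>
      v = .u i ℓ
    ∨ (∃ (occ : Σ i' : Fin φ.m, {l : Fin φ.n × Bool // l ∈ φ.clauses i'})
        (c : Fin 2) (t : Fin (r - 2)),
          occ.1 = i ∧ v = .s occ ℓ c t ∧ r ≤ k + (t : ℕ) + 2)
    ∨ (∃ l, l ∈ φ.clauses i ∧ v = .v l.1 l.2 ∧ r ≤ k + 1)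
    ∨ (∃ l, l ∈ φ.clauses i ∧ v = .v l.1 (!l.2) ∧ r ≤ k ∧
          rnk A (.v l.1 l.2) ≤ rnk A v)
  | .v j b, v =>
      v = .v j b
    ∨ (v = .v j (!b) ∧ 1 ≤ k)
    ∨ (∃ (occ : Σ i' : Fin φ.m, {l : Fin φ.n × Bool // l ∈ φ.clauses i'})
        (ℓ : Fin (2 * r)) (c : Fin 2) (t : Fin (r - 2)),
          occ.2.1 = (j, b) ∧ v = .s occ ℓ c t ∧ (t : ℕ) + 1 ≤ k)
    ∨ (∃ (i : Fin φ.m) (ℓ : Fin (2 * r)),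
          (j, b) ∈ φ.clauses i ∧ v = .u i ℓ ∧ r ≤ k + 1)
  | .s occ ℓ c t, v =>
      (∃ t' : Fin (r - 2), v = .s occ ℓ c t' ∧ (t' : ℕ) ≤ (t : ℕ) + k ∧
          (t : ℕ) ≤ (t' : ℕ) + k)
    ∨ (v = .u occ.1 ℓ ∧ r ≤ k + (t : ℕ) + 2)
    ∨ (v = .v occ.2.1.1 occ.2.1.2 ∧ (t : ℕ) + 1 ≤ k)
    ∨ (v = .v occ.2.1.1 (!occ.2.1.2) ∧ (t : ℕ) + 2 ≤ k ∧
          rnk A (.v occ.2.1.1 occ.2.1.2) ≤ rnk A v)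
    ∨ (∃ l, l ∈ φ.clauses occ.1 ∧ v = .v l.1 l.2 ∧ 2 * r ≤ k + (t : ℕ) + 3)

lemma inv_refl (A : Fin φ.n → Bool) (k : ℕ) (v : VtxWR r φ) : Inv A k v v := by
  cases v with
  | u i ℓ => exact Or.inl rfl
  | v j b => exact Or.inl rfl
  | s occ ℓ c t => exact Or.inl ⟨t, rfl, by omega, by omega⟩

lemma step (A : Fin φ.n → Bool) (hr : 3 ≤ r) {k : ℕ} (hk : k + 1 ≤ r) {a b v : VtxWR r φ}
    (hab : (GWR r φ).Adj a b) (hbv : b = v ∨ rnk A b ≤ rnk A v) (h : Inv A k b v) :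
    Inv A (k + 1) a v := by
  rw [GWR, SimpleGraph.fromRel_adj] at hab
  obtain ⟨hne, hrel⟩ := hab
  cases a with
  | u i ℓ =>
    cases b with
    | u i' ℓ' => simp [relWR] at hrel
    | v j b0 => simp [relWR] at hrel
    | s occ ℓs c t =>
      obtain ⟨h1, h2, h3⟩ : occ.1 = i ∧ ℓs = ℓ ∧ (t : ℕ) + 1 = r - 2 := by
        simpa [relWR] using hrel
      subst h1; subst h2
      have ht := t.isLt
      rcases h with ⟨t', hv, ha1, ha2⟩ | ⟨hv, hle⟩ | ⟨hv, hle⟩ | ⟨hv, hle, hrk⟩ | ⟨l, hl, hv, hle⟩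
      · exact Or.inr (Or.inl ⟨occ, c, t', rfl, hv, by omega⟩)
      · exact Or.inl hv
      · exact Or.inr (Or.inr (Or.inl ⟨occ.2.1, occ.2.2, hv, by omega⟩))
      · exact Or.inr (Or.inr (Or.inr ⟨occ.2.1, occ.2.2, hv, by omega, hrk⟩))
      · exact absurd hle (by omega)
  | v j b0 =>
    cases b with
    | u i' ℓ' => simp [relWR] at hrel
    | v j' b0' =>
      have hj : j = j' := by
        rcases (by simpa [relWR] using hrel : j = j' ∨ j' = j) with h' | h'
        · exact h'
        · exact h'.symm
      subst hj
      have hb0 : b0' = !b0 := by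
        cases b0 <;> cases b0' <;> first | rfl | exact absurd rfl hne
      subst hb0
      rcases h with hv | ⟨hv, _⟩ | ⟨occ, ℓ2, c2, t2, hocc, hv, hle⟩ | ⟨i2, ℓ2, hmem, hv, hle⟩
      · exact Or.inr (Or.inl ⟨hv, by omega⟩)
      · rw [Bool.not_not] at hv; exact Or.inl hv
      · exfalso
        have hne2 : VtxWR.v j (!b0) ≠ v := by rw [hv]; simp
        have hh := hbv.resolve_left hne2
        rw [hv] at hh; simp only [rnk_s] at hh
        have := rnk_v_ge A j (!b0)
        have ht2 := t2.isLt
        omega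
      · exfalso
        have hne2 : VtxWR.v j (!b0) ≠ v := by rw [hv]; simp
        have hh := hbv.resolve_left hne2
        rw [hv] at hh; simp only [rnk_u] at hh
        have := rnk_v_ge A j (!b0)
        omega
    | s occ ℓs c t =>
      obtain ⟨hocc, ht0⟩ : occ.2.1 = (j, b0) ∧ (t : ℕ) = 0 := by simpa [relWR] using hrel
      rcases h with ⟨t', hv, ha1, ha2⟩ | ⟨hv, hle⟩ | ⟨hv, hle⟩ | ⟨hv, hle, hrk⟩ | ⟨l, hl, hv, hle⟩
      · exact Or.inr (Or.inr (Or.inl ⟨occ, ℓs, c, t', hocc, hv, by omega⟩))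
      · refine Or.inr (Or.inr (Or.inr ⟨occ.1, ℓs, ?_, hv, by omega⟩))
        rw [← hocc]; exact occ.2.2
      · refine Or.inl ?_
        rw [hv, hocc]
      · refine Or.inr (Or.inl ⟨?_, by omega⟩)
        rw [hv, hocc]
      · exact absurd hle (by omega)
  | s occ ℓ c t =>
    cases b with
    | u i' ℓ' =>
      obtain ⟨h1, h2, h3⟩ : occ.1 = i' ∧ ℓ = ℓ' ∧ (t : ℕ) + 1 = r - 2 := by
        simpa [relWR] using hrel
      subst h1; subst h2
      have ht := t.isLt
      rcases h with hv | ⟨occ2, c2, t2, hocc2, hv, hle⟩ | ⟨l, hl, hv, hle⟩ | ⟨l, hl, hv, hle, hrk⟩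
      · exact Or.inr (Or.inl ⟨hv, by omega⟩)
      · exfalso
        have hne2 : VtxWR.u occ.1 ℓ ≠ v := by rw [hv]; simp
        have hh := hbv.resolve_left hne2
        rw [hv] at hh; simp only [rnk_u, rnk_s] at hh
        have ht2 := t2.isLt
        omega
      · exact Or.inr (Or.inr (Or.inr (Or.inr ⟨l, hl, hv, by omega⟩)))
      · exact absurd hle (by omega)
    | v j b0 =>
      obtain ⟨hocc, ht0⟩ : occ.2.1 = (j, b0) ∧ (t : ℕ) = 0 := by simpa [relWR] using hrel
      rcases h with hv | ⟨hv, hk1⟩ | ⟨occ3, ℓ3, c3, t3, hocc3, hv, hle⟩ | ⟨i2, ℓ2, hmem, hv, hle⟩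
      · refine Or.inr (Or.inr (Or.inl ⟨?_, by omega⟩))
        rw [hocc]; exact hv
      · refine Or.inr (Or.inr (Or.inr (Or.inl ⟨?_, by omega, ?_⟩)))
        · rw [hocc]; exact hv
        · have hne2 : VtxWR.v j b0 ≠ v := by rw [hv]; simp
          have hh := hbv.resolve_left hne2
          rw [hocc]; exact hh
      · exfalso
        have hne2 : VtxWR.v j b0 ≠ v := by rw [hv]; simp
        have hh := hbv.resolve_left hne2
        rw [hv] at hh; simp only [rnk_s] at hh
        have := rnk_v_ge A j b0
        have ht3 := t3.isLt
        omega
      · exfalso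
        have hne2 : VtxWR.v j b0 ≠ v := by rw [hv]; simp
        have hh := hbv.resolve_left hne2
        rw [hv] at hh; simp only [rnk_u] at hh
        have := rnk_v_ge A j b0
        omega
    | s occ' ℓ' c' t' =>
      obtain ⟨h1, h2, h3, h4⟩ :
          occ = occ' ∧ ℓ = ℓ' ∧ c = c' ∧ ((t' : ℕ) = (t : ℕ) + 1 ∨ (t : ℕ) = (t' : ℕ) + 1) := by
        rcases hrel with h' | h'
        · obtain ⟨e1, e2, e3, e4⟩ :
              occ = occ' ∧ ℓ = ℓ' ∧ c = c' ∧ (t' : ℕ) = (t : ℕ) + 1 := by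
            simpa [relWR] using h'
          exact ⟨e1, e2, e3, Or.inl e4⟩
        · obtain ⟨e1, e2, e3, e4⟩ :
              occ' = occ ∧ ℓ' = ℓ ∧ c' = c ∧ (t : ℕ) = (t' : ℕ) + 1 := by
            simpa [relWR] using h'
          exact ⟨e1.symm, e2.symm, e3.symm, Or.inr e4⟩
      subst h1; subst h2; subst h3
      have hd1 : (t : ℕ) ≤ (t' : ℕ) + 1 := by rcases h4 with h' | h' <;> omega
      have hd2 : (t' : ℕ) ≤ (t : ℕ) + 1 := by rcases h4 with h' | h' <;> omega
      rcases h with ⟨t'', hv, ha1, ha2⟩ | ⟨hv, hle⟩ | ⟨hv, hle⟩ | ⟨hv, hle, hrk⟩ | ⟨l, hl, hv, hle⟩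
      · exact Or.inl ⟨t'', hv, by omega, by omega⟩
      · exact Or.inr (Or.inl ⟨hv, by omega⟩)
      · exact Or.inr (Or.inr (Or.inl ⟨hv, by omega⟩))
      · exact Or.inr (Or.inr (Or.inr (Or.inl ⟨hv, by omega, hrk⟩)))
      · exact Or.inr (Or.inr (Or.inr (Or.inr ⟨l, hl, hv, by omega⟩)))

lemma master (A : Fin φ.n → Bool) (hr : 3 ≤ r) {a v : VtxWR r φ} (p : (GWR r φ).Walk a v) :
    ∀ k, k ≤ r → p.length ≤ k →
      (∀ x ∈ p.support, x ≠ v → rnk A x ≤ rnk A v) → Inv A k a v := by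
  induction p with
  | nil => exact fun k _ _ _ => inv_refl A k _
  | @cons a0 b0 v0 hadj q ih =>
    intro k hk hlen hsup
    have hlen' : q.length + 1 ≤ k := by
      simpa [SimpleGraph.Walk.length_cons] using hlen
    have hqsup : ∀ x ∈ q.support, x ≠ v0 → rnk A x ≤ rnk A v0 := by
      intro x hx
      exact hsup x (by rw [SimpleGraph.Walk.support_cons]; exact List.mem_cons_of_mem _ hx)
    have hbv : b0 = v0 ∨ rnk A b0 ≤ rnk A v0 := by
      by_cases hb : b0 = v0
      · exact Or.inl hb
      · exact Or.inr (hqsup b0 q.start_mem_support hb)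
    have hq := ih (k - 1) (by omega) (by omega) hqsup
    have hstep := step A hr (k := k - 1) (by omega) hadj hbv hq
    rwa [Nat.sub_add_cancel (by omega : 1 ≤ k)] at hstep

noncomputable def fA (A : Fin φ.n → Bool) : VtxWR r φ → ℕ := fun a =>
  rnk A a * (Fintype.card (VtxWR r φ) + 1) + ((Fintype.equivFin (VtxWR r φ)) a : ℕ)

lemma fA_inj (A : Fin φ.n → Bool) : Function.Injective (fA (r := r) (φ := φ) A) := by
  intro a b hab
  have ha := ((Fintype.equivFin (VtxWR r φ)) a).isLt
  have hb := ((Fintype.equivFin (VtxWR r φ)) b).isLt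
  have hmod : ((Fintype.equivFin (VtxWR r φ)) a : ℕ) =
      ((Fintype.equivFin (VtxWR r φ)) b : ℕ) := by
    have key : ∀ x y : ℕ, y < Fintype.card (VtxWR r φ) + 1 →
        (x * (Fintype.card (VtxWR r φ) + 1) + y) % (Fintype.card (VtxWR r φ) + 1) = y := by
      intro x y hy
      rw [Nat.mul_comm, Nat.mul_add_mod, Nat.mod_eq_of_lt hy]
    have h1 := congrArg (· % (Fintype.card (VtxWR r φ) + 1)) hab
    simp only [fA] at h1
    rwa [key _ _ (Nat.lt_succ_of_lt ha), key _ _ (Nat.lt_succ_of_lt hb)] at h1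
  exact (Fintype.equivFin (VtxWR r φ)).injective (Fin.ext hmod)

noncomputable def σA (A : Fin φ.n → Bool) : LinearOrder (VtxWR r φ) :=
  LinearOrder.lift' (fA A) (fA_inj A)

lemma oltA_lt {A : Fin φ.n → Bool} {a b : VtxWR r φ} (h : olt (σA A) a b) :
    fA A a < fA A b := h

lemma oltA_rnk {A : Fin φ.n → Bool} {a b : VtxWR r φ} (h : olt (σA A) a b) :
    rnk A a ≤ rnk A b := by
  by_contra hlt
  have h' : fA A a < fA A b := oltA_lt h
  have ha := ((Fintype.equivFin (VtxWR r φ)) a).isLt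
  have hb := ((Fintype.equivFin (VtxWR r φ)) b).isLt
  have hmul : (rnk A b + 1) * (Fintype.card (VtxWR r φ) + 1) ≤
      rnk A a * (Fintype.card (VtxWR r φ) + 1) :=
    Nat.mul_le_mul_right _ (by omega)
  have hexp : (rnk A b + 1) * (Fintype.card (VtxWR r φ) + 1) =
      rnk A b * (Fintype.card (VtxWR r φ) + 1) + (Fintype.card (VtxWR r φ) + 1) :=
    Nat.succ_mul _ _
  unfold fA at h'
  omega

lemma oltA_ne {A : Fin φ.n → Bool} {a b : VtxWR r φ} (h : olt (σA A) a b) : a ≠ b := by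
  intro he; subst he; exact lt_irrefl _ (oltA_lt h)

lemma wreach_inv {A : Fin φ.n → Bool} {u v : VtxWR r φ} (hr : 3 ≤ r)
    (hv : v ∈ wreachSet (GWR r φ) (σA A) r u) : olt (σA A) u v ∧ Inv A r u v := by
  obtain ⟨hlt, p, hpath, hlen, hint⟩ := hv
  refine ⟨hlt, master A hr p r le_rfl hlen ?_⟩
  intro x hx hxv
  by_cases hxu : x = u
  · subst hxu; exact oltA_rnk hlt
  · exact oltA_rnk (hint x hx hxu hxv)

lemma ncard_le_of_subset_finset {s : Set (VtxWR r φ)} {t : Finset (VtxWR r φ)}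
    (h : s ⊆ ↑t) : s.ncard ≤ t.card := by
  have := Set.ncard_le_ncard h t.finite_toSet
  simpa [Set.ncard_coe_finset] using this

lemma bound_v (A : Fin φ.n → Bool) (hr : 3 ≤ r) (j : Fin φ.n) (b : Bool) :
    (wreachSet (GWR r φ) (σA A) r (VtxWR.v j b)).ncard ≤ 2 * r - 1 := by
  classical
  have hsub : wreachSet (GWR r φ) (σA A) r (VtxWR.v j b) ⊆
      ↑({VtxWR.v j (!b)} : Finset (VtxWR r φ)) := by
    intro v hv
    obtain ⟨hlt, hinv⟩ := wreach_inv hr hv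
    have hru := rnk_v_ge A j b
    rcases hinv with hveq | ⟨hveq, _⟩ | ⟨occ, ℓ, c, t, _, hveq, _⟩ | ⟨i, ℓ, _, hveq, _⟩
    · exact absurd hveq.symm (oltA_ne hlt)
    · simp [hveq]
    · exfalso
      have h2 := oltA_rnk hlt
      rw [hveq] at h2; simp only [rnk_s] at h2
      have := t.isLt; omega
    · exfalso
      have h2 := oltA_rnk hlt
      rw [hveq] at h2; simp only [rnk_u] at h2
      omega
  refine le_trans (ncard_le_of_subset_finset hsub) ?_
  simp only [Finset.card_singleton]
  omega

lemma bound_u (A : Fin φ.n → Bool) (hA : φ.Sat A) (hr : 3 ≤ r) (i : Fin φ.m)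
    (ℓ : Fin (2 * r)) :
    (wreachSet (GWR r φ) (σA A) r (VtxWR.u i ℓ)).ncard ≤ 2 * r - 1 := by
  classical
  have hsub : wreachSet (GWR r φ) (σA A) r (VtxWR.u i ℓ) ⊆
      ↑((φ.clauses i).biUnion fun l =>
        if A l.1 = l.2 then {VtxWR.v l.1 l.2}
        else {VtxWR.v l.1 l.2, VtxWR.v l.1 (!l.2)}) := by
    intro v hv
    obtain ⟨hlt, hinv⟩ := wreach_inv hr hv
    rcases hinv with hveq | ⟨occ, c, t, _, hveq, _⟩ | ⟨l, hl, hveq, _⟩ | ⟨l, hl, hveq, _, hrk⟩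
    · exact absurd hveq.symm (oltA_ne hlt)
    · exfalso
      have h2 := oltA_rnk hlt
      rw [hveq] at h2; simp only [rnk_u, rnk_s] at h2
      have := t.isLt; omega
    · subst hveq
      simp only [Finset.mem_coe, Finset.mem_biUnion]
      refine ⟨l, hl, ?_⟩
      split <;> simp
    · subst hveq
      have hAl : A l.1 ≠ l.2 := by
        intro hTr
        rw [rnk_v_true A hTr] at hrk
        have hpt : A l.1 ≠ !l.2 := by rw [hTr]; cases l.2 <;> simp
        rw [rnk_v_false A hpt] at hrk
        omega
      simp only [Finset.mem_coe, Finset.mem_biUnion]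
      exact ⟨l, hl, by rw [if_neg hAl]; simp⟩
  refine le_trans (ncard_le_of_subset_finset hsub) ?_
  obtain ⟨l0, hl0, hl0t⟩ := hA i
  have hcard := φ.clause_card i
  have h1 : ((φ.clauses i).biUnion fun l =>
      if A l.1 = l.2 then ({VtxWR.v l.1 l.2} : Finset (VtxWR r φ))
      else {VtxWR.v l.1 l.2, VtxWR.v l.1 (!l.2)}).card ≤
      ∑ l ∈ φ.clauses i, (if A l.1 = l.2 then 1 else 2) := by
    refine le_trans Finset.card_biUnion_le (Finset.sum_le_sum ?_)
    intro l _
    split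
    · simp
    · exact le_trans (Finset.card_insert_le _ _) (by simp)
  have hsplit := Finset.add_sum_erase (φ.clauses i)
    (fun l => if A l.1 = l.2 then 1 else 2) hl0
  have herase : ∑ l ∈ (φ.clauses i).erase l0, (if A l.1 = l.2 then 1 else 2) ≤
      ((φ.clauses i).erase l0).card * 2 := by
    have := Finset.sum_le_card_nsmul ((φ.clauses i).erase l0)
      (fun l => if A l.1 = l.2 then 1 else 2) 2
      (by intro x _; show (if A x.1 = x.2 then 1 else 2) ≤ 2; split <;> omega)
    simpa [smul_eq_mul] using this
  have hec : ((φ.clauses i).erase l0).card = r - 1 := by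
    rw [Finset.card_erase_of_mem hl0, hcard]
  have hsplit' : (if A l0.1 = l0.2 then 1 else 2) +
      ∑ x ∈ (φ.clauses i).erase l0, (if A x.1 = x.2 then 1 else 2) =
      ∑ x ∈ φ.clauses i, (if A x.1 = x.2 then 1 else 2) := hsplit
  rw [if_pos hl0t] at hsplit'
  omega

lemma bound_s (A : Fin φ.n → Bool) (hr : 3 ≤ r)
    (occ : Σ i' : Fin φ.m, {l : Fin φ.n × Bool // l ∈ φ.clauses i'})
    (ℓ : Fin (2 * r)) (c : Fin 2) (t : Fin (r - 2)) :
    (wreachSet (GWR r φ) (σA A) r (VtxWR.s occ ℓ c t)).ncard ≤ 2 * r - 1 := by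
  classical
  have ht := t.isLt
  by_cases htop : (t : ℕ) + 3 = r
  · have hsub : wreachSet (GWR r φ) (σA A) r (VtxWR.s occ ℓ c t) ⊆
        ↑(insert (VtxWR.u occ.1 ℓ) (insert (VtxWR.v occ.2.1.1 (!occ.2.1.2))
          ((φ.clauses occ.1).image fun l => VtxWR.v l.1 l.2))) := by
      intro v hv
      obtain ⟨hlt, hinv⟩ := wreach_inv hr hv
      rcases hinv with ⟨t', hveq, ha1, ha2⟩ | ⟨hveq, _⟩ | ⟨hveq, _⟩ | ⟨hveq, _, _⟩ |
        ⟨l, hl, hveq, _⟩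
      · exfalso
        have h2 := oltA_rnk hlt
        rw [hveq] at h2; simp only [rnk_s] at h2
        have ht' := t'.isLt
        have htt : t' = t := Fin.ext (by omega)
        exact oltA_ne hlt (by rw [hveq, htt])
      · simp [hveq]
      · simp only [Finset.coe_insert, Set.mem_insert_iff, Finset.coe_image, Set.mem_image,
          Finset.mem_coe]
        right; right
        exact ⟨occ.2.1, occ.2.2, hveq.symm⟩
      · simp [hveq]
      · simp only [Finset.coe_insert, Set.mem_insert_iff, Finset.coe_image, Set.mem_image,
          Finset.mem_coe]
        right; right
        exact ⟨l, hl, hveq.symm⟩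
    refine le_trans (ncard_le_of_subset_finset hsub) ?_
    refine le_trans (Finset.card_insert_le _ _) ?_
    have h2 : (insert (VtxWR.v occ.2.1.1 (!occ.2.1.2))
        ((φ.clauses occ.1).image fun l => VtxWR.v l.1 l.2)).card ≤
        1 + ((φ.clauses occ.1).image fun l => VtxWR.v l.1 l.2).card := by
      have := Finset.card_insert_le (VtxWR.v occ.2.1.1 (!occ.2.1.2))
        ((φ.clauses occ.1).image fun l => VtxWR.v l.1 l.2)
      omega
    have h3 : ((φ.clauses occ.1).image fun l => VtxWR.v l.1 l.2).card ≤ r := by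
      refine le_trans (Finset.card_image_le) ?_
      rw [φ.clause_card occ.1]
    omega
  · have hsub : wreachSet (GWR r φ) (σA A) r (VtxWR.s occ ℓ c t) ⊆
        ↑(insert (VtxWR.u occ.1 ℓ) (insert (VtxWR.v occ.2.1.1 occ.2.1.2)
          (insert (VtxWR.v occ.2.1.1 (!occ.2.1.2))
            ((Finset.univ : Finset (Fin (r - 2))).image fun t' => VtxWR.s occ ℓ c t')))) := by
      intro v hv
      obtain ⟨hlt, hinv⟩ := wreach_inv hr hv
      rcases hinv with ⟨t', hveq, ha1, ha2⟩ | ⟨hveq, _⟩ | ⟨hveq, _⟩ | ⟨hveq, _, _⟩ |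
        ⟨l, hl, hveq, hle⟩
      · simp only [Finset.coe_insert, Set.mem_insert_iff, Finset.coe_image, Set.mem_image,
          Finset.mem_coe]
        right; right; right
        exact ⟨t', Finset.mem_univ t', hveq.symm⟩
      · simp [hveq]
      · simp [hveq]
      · simp [hveq]
      · exfalso; omega
    refine le_trans (ncard_le_of_subset_finset hsub) ?_
    have h4 : ((Finset.univ : Finset (Fin (r - 2))).image
        fun t' => VtxWR.s occ ℓ c t').card ≤ r - 2 := by
      refine le_trans (Finset.card_image_le) ?_
      simp
    have h3 := Finset.card_insert_le (VtxWR.v occ.2.1.1 (!occ.2.1.2))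
      ((Finset.univ : Finset (Fin (r - 2))).image fun t' => VtxWR.s occ ℓ c t')
    have h2 := Finset.card_insert_le (VtxWR.v occ.2.1.1 occ.2.1.2)
      (insert (VtxWR.v occ.2.1.1 (!occ.2.1.2))
        ((Finset.univ : Finset (Fin (r - 2))).image fun t' => VtxWR.s occ ℓ c t'))
    have h1 := Finset.card_insert_le (VtxWR.u occ.1 ℓ)
      (insert (VtxWR.v occ.2.1.1 occ.2.1.2) (insert (VtxWR.v occ.2.1.1 (!occ.2.1.2))
        ((Finset.univ : Finset (Fin (r - 2))).image fun t' => VtxWR.s occ ℓ c t')))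
    omega

lemma wcol_bound (A : Fin φ.n → Bool) (hA : φ.Sat A) (hr : 3 ≤ r) :
    wcolOrd (GWR r φ) (σA A) r ≤ 2 * r - 1 := by
  apply Finset.sup_le
  intro u _
  cases u with
  | u i ℓ => exact bound_u A hA hr i ℓ
  | v j b => exact bound_v A hr j b
  | s occ ℓ c t => exact bound_s A hr occ ℓ c t

end WCR

/-- If the Exact r-SAT instance `φ` (with `r ≥ 3`) is satisfiable, then the reduction
graph `G(φ)` has weak `r`-coloring number at most `2r - 1`. -/
theorem sat_implies_wcolr_le (r : ℕ) (hr : 3 ≤ r) (φ : ExactSAT r) (hsat : φ.Satisfiable) :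
    wcolNum (GWR r φ) r ≤ 2 * r - 1 := by
  obtain ⟨A, hA⟩ := hsat
  exact le_trans (ciInf_le (OrderBot.bddBelow _) (WCR.σA A)) (WCR.wcol_bound A hA hr)
end

section
/- Fix r ≥ 3. Let φ be an instance of Exact r-SAT and G(φ) the graph of the weak-r-coloring reduction (2r clause vertices per clause, adjacent literal pairs v_j, v'_j, and two (r−2)-subdivided edges between each literal vertex and each clause vertex of clauses containing that literal). If wcol_r(G(φ)) ≤ 2r−1, then φ has a satisfying assignment. -/
/-!
Fix an order `σ` attaining `wcol_r` and read the assignment off it: `x_j` is true iff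
`v'_j <_σ v_j`, so a literal is false iff its vertex precedes its partner. On a path of length
at most `r` from `z` to a vertex above `z`, the `σ`-maximum of the path is weakly `r`-reachable
from `z`. Suppose the clause `c_i` is false, and let `z` be the `σ`-least among the clause
vertices `u_i^ℓ` and the literal vertices of `c_i`. If `z` is a literal vertex, the maxima of
its gadget paths to `u_i^1, …, u_i^{2r}` are `2r` distinct vertices. If `z = u_i^ℓ`, the two
gadget paths to each literal vertex `v_l` yield two weakly reachable vertices near `v_l`: their
maxima if these differ, and otherwise `v_l` itself together with its partner, which lies above
`v_l` because `l` is false. Either way `z` weakly `r`-reaches `2r` vertices.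
-/

open SimpleGraph

variable {V : Type*}

open Finset in
theorem card_mul_le_ncard_of_le_ncard_inter_preimage {α β : Type*} {S : Set α} (hS : S.Finite)
    (key : α → β) (t : Finset β) {n : ℕ} (h : ∀ b ∈ t, n ≤ (S ∩ key ⁻¹' {b}).ncard) :
    #t * n ≤ S.ncard := by
  have hdisj : (t : Set β).PairwiseDisjoint fun b => S ∩ key ⁻¹' {b} := by
    intro b _ b' _ hbb'
    exact Set.disjoint_left.2 fun x hx hx' => hbb' (hx.2.symm.trans hx'.2)
  calc #t * n ≤ ∑ b ∈ t, (S ∩ key ⁻¹' {b}).ncard := by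
        simpa [mul_comm] using t.card_nsmul_le_sum _ n h
    _ = (⋃ b ∈ (t : Set β), S ∩ key ⁻¹' {b}).ncard := by
        rw [t.finite_toSet.ncard_biUnion (fun _ _ => hS.inter_of_left _) hdisj,
          finsum_mem_coe_finset]
    _ ≤ S.ncard := Set.ncard_le_ncard (by simp) hS

theorem exists_linearOrder_ncard_wreachSet_le_wcolNum [Fintype V]
    (G : SimpleGraph V) (r : ℕ) :
    ∃ σ : LinearOrder V, ∀ z, (wreachSet G σ r z).ncard ≤ wcolNum G r := by
  have : Nonempty (LinearOrder V) :=
    ⟨LinearOrder.lift' _ (Fintype.equivFin V).injective⟩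
  obtain ⟨σ, hσ⟩ := ciInf_mem fun σ : LinearOrder V => wcolOrd G σ r
  exact ⟨σ, fun z => (Finset.le_sup (f := fun u => (wreachSet G σ r u).ncard)
    (Finset.mem_univ z)).trans hσ.le⟩

theorem SimpleGraph.Walk.IsPath.exists_max_mem_wreachSet [σ : LinearOrder V]
    {G : SimpleGraph V} {r : ℕ} {z y : V} {p : G.Walk z y} (hp : p.IsPath) (hlen : p.length ≤ r)
    (hzy : z < y) : ∃ m ∈ p.support, m ∈ wreachSet G σ r z ∧ ∀ x ∈ p.support, x ≤ m := by
  classical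
  obtain ⟨m, hm, hmax⟩ := p.support.toFinset.exists_max_image id ⟨z, by simp⟩
  simp only [List.mem_toFinset, id] at hm hmax
  refine ⟨m, hm, ⟨hzy.trans_le (hmax y p.end_mem_support), p.takeUntil m hm, hp.takeUntil hm,
    (p.length_takeUntil_le_length hm).trans hlen, fun w hw _ hwm => ?_⟩, hmax⟩
  exact lt_of_le_of_ne (hmax w (p.support_takeUntil_subset_support hm hw)) hwm

theorem SimpleGraph.Walk.IsPath.mem_wreachSet_of_adj [σ : LinearOrder V]
    {G : SimpleGraph V} {r : ℕ} {z y y' : V} {p : G.Walk z y} (hp : p.IsPath)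
    (hlen : p.length < r) (hadj : G.Adj y y') (hlt : ∀ x ∈ p.support, x < y') :
    y' ∈ wreachSet G σ r z := by
  refine ⟨hlt z p.start_mem_support, p.concat hadj,
    hp.concat (fun h => lt_irrefl _ (hlt y' h)) hadj, by simpa using hlen, fun w hw _ hwy' => ?_⟩
  simp only [Walk.support_concat, List.mem_append, List.mem_singleton] at hw
  exact hw.elim (hlt w) (absurd · hwy')

abbrev ExactSAT.Occ {r : ℕ} (φ : ExactSAT r) : Type :=
  Σ i : Fin φ.m, {l : Fin φ.n × Bool // l ∈ φ.clauses i}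

namespace VtxWR

variable {r : ℕ} {φ : ExactSAT r}

def slot : VtxWR r φ → Option (Fin (2 * r))
  | .u _ ℓ => some ℓ
  | .v _ _ => none
  | .s _ ℓ _ _ => some ℓ

def var : VtxWR r φ → Option (Fin φ.n)
  | .u _ _ => none
  | .v j _ => some j
  | .s occ _ _ _ => some occ.2.1.1

end VtxWR

namespace GWR

open VtxWR

variable {r : ℕ} {φ : ExactSAT r}

theorem adj_iff {x y : VtxWR r φ} :
    (GWR r φ).Adj x y ↔ x ≠ y ∧ (relWR r φ x y ∨ relWR r φ y x) :=
  SimpleGraph.fromRel_adj _ _ _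

theorem adj_v_v (j : Fin φ.n) (b : Bool) : (GWR r φ).Adj (v j b) (v j !b) :=
  adj_iff.2 ⟨by simp, Or.inl rfl⟩

theorem adj_v_s (occ : φ.Occ) (ℓ : Fin (2 * r)) (c : Fin 2) (ht : 0 < r - 2) :
    (GWR r φ).Adj (v occ.2.1.1 occ.2.1.2) (s occ ℓ c ⟨0, ht⟩) :=
  adj_iff.2 ⟨by simp, Or.inl ⟨rfl, rfl⟩⟩

theorem adj_s_s (occ : φ.Occ) (ℓ : Fin (2 * r)) (c : Fin 2) {t : ℕ} (ht : t + 1 < r - 2) :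
    (GWR r φ).Adj (s occ ℓ c ⟨t, by omega⟩) (s occ ℓ c ⟨t + 1, ht⟩) :=
  adj_iff.2 ⟨by simp, Or.inl ⟨rfl, rfl, rfl, rfl⟩⟩

theorem adj_s_u (occ : φ.Occ) (ℓ : Fin (2 * r)) (c : Fin 2) {t : ℕ} (ht : t + 1 = r - 2) :
    (GWR r φ).Adj (s occ ℓ c ⟨t, by omega⟩) (u occ.1 ℓ) :=
  adj_iff.2 ⟨by simp, Or.inl ⟨rfl, rfl, ht⟩⟩

def subdivWalk (occ : φ.Occ) (ℓ : Fin (2 * r)) (c : Fin 2) :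
    (t : ℕ) → (ht : t < r - 2) → (GWR r φ).Walk (v occ.2.1.1 occ.2.1.2) (s occ ℓ c ⟨t, ht⟩)
  | 0, ht => .cons (adj_v_s occ ℓ c ht) .nil
  | t + 1, ht => (subdivWalk occ ℓ c t (by omega)).concat (adj_s_s occ ℓ c ht)

theorem length_subdivWalk (occ : φ.Occ) (ℓ : Fin (2 * r)) (c : Fin 2) (t : ℕ) (ht : t < r - 2) :
    (subdivWalk occ ℓ c t ht).length = t + 1 := by
  induction t with
  | zero => rfl
  | succ t ih => simp [subdivWalk, ih]

theorem mem_support_subdivWalk (occ : φ.Occ) (ℓ : Fin (2 * r)) (c : Fin 2) (t : ℕ)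
    (ht : t < r - 2) {x : VtxWR r φ} (hx : x ∈ (subdivWalk occ ℓ c t ht).support) :
    x = v occ.2.1.1 occ.2.1.2 ∨ ∃ t' : Fin (r - 2), (t' : ℕ) ≤ t ∧ x = s occ ℓ c t' := by
  induction t with
  | zero =>
    simp only [subdivWalk, Walk.support_cons, Walk.support_nil, List.mem_cons,
      List.not_mem_nil, or_false] at hx
    exact hx.imp id fun h => ⟨_, le_rfl, h⟩
  | succ t ih =>
    simp only [subdivWalk, Walk.support_concat, List.mem_append, List.mem_singleton] at hx
    rcases hx with hx | rfl
    · obtain h | ⟨t', ht', rfl⟩ := ih (by omega) hx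
      · exact .inl h
      · exact .inr ⟨t', by omega, rfl⟩
    · exact .inr ⟨_, le_rfl, rfl⟩

theorem isPath_subdivWalk (occ : φ.Occ) (ℓ : Fin (2 * r)) (c : Fin 2) (t : ℕ) (ht : t < r - 2) :
    (subdivWalk occ ℓ c t ht).IsPath := by
  induction t with
  | zero => exact Walk.IsPath.nil.cons (by simp)
  | succ t ih =>
    refine (ih (by omega)).concat (fun hx => ?_) _
    obtain h | ⟨t', ht', h⟩ := mem_support_subdivWalk occ ℓ c t (by omega) hx
    · cases h
    · simp only [s.injEq, true_and, Fin.ext_iff] at h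
      omega

def gadgetWalk (hr : 3 ≤ r) (occ : φ.Occ) (ℓ : Fin (2 * r)) (c : Fin 2) :
    (GWR r φ).Walk (v occ.2.1.1 occ.2.1.2) (u occ.1 ℓ) :=
  (subdivWalk occ ℓ c (r - 3) (by omega)).concat (adj_s_u occ ℓ c (by omega))

theorem length_gadgetWalk (hr : 3 ≤ r) (occ : φ.Occ) (ℓ : Fin (2 * r)) (c : Fin 2) :
    (gadgetWalk hr occ ℓ c).length = r - 1 := by
  rw [gadgetWalk, Walk.length_concat, length_subdivWalk]
  omega

theorem mem_support_gadgetWalk (hr : 3 ≤ r) (occ : φ.Occ) (ℓ : Fin (2 * r)) (c : Fin 2)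
    {x : VtxWR r φ} (hx : x ∈ (gadgetWalk hr occ ℓ c).support) :
    x = v occ.2.1.1 occ.2.1.2 ∨ x = u occ.1 ℓ ∨ ∃ t, x = s occ ℓ c t := by
  simp only [gadgetWalk, Walk.support_concat, List.mem_append, List.mem_singleton] at hx
  rcases hx with hx | rfl
  · obtain h | ⟨t, -, rfl⟩ := mem_support_subdivWalk occ ℓ c _ _ hx
    · exact .inl h
    · exact .inr (.inr ⟨t, rfl⟩)
  · exact .inr (.inl rfl)

theorem isPath_gadgetWalk (hr : 3 ≤ r) (occ : φ.Occ) (ℓ : Fin (2 * r)) (c : Fin 2) :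
    (gadgetWalk hr occ ℓ c).IsPath := by
  refine (isPath_subdivWalk occ ℓ c _ _).concat (fun hx => ?_) _
  obtain h | ⟨t', -, h⟩ := mem_support_subdivWalk occ ℓ c _ _ hx <;> cases h

section

open Finset

variable [σ : LinearOrder (VtxWR r φ)]

theorem two_mul_le_ncard_wreachSet_v (hr : 3 ≤ r) (occ : φ.Occ)
    (hlt : ∀ ℓ, v occ.2.1.1 occ.2.1.2 < u occ.1 ℓ) :
    2 * r ≤ (wreachSet (GWR r φ) σ r (v occ.2.1.1 occ.2.1.2)).ncard := by
  have hcard : #(univ.image (some : Fin (2 * r) → _)) = 2 * r := by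
    simp [card_image_of_injective _ (Option.some_injective _)]
  have key := card_mul_le_ncard_of_le_ncard_inter_preimage (Set.toFinite
    (wreachSet (GWR r φ) σ r (v occ.2.1.1 occ.2.1.2))) slot (univ.image some) (n := 1) ?_
  · rwa [hcard, mul_one] at key
  simp only [mem_image, mem_univ, true_and]
  rintro _ ⟨ℓ, rfl⟩
  obtain ⟨m, hm, hmW, -⟩ := (isPath_gadgetWalk hr occ ℓ 0).exists_max_mem_wreachSet (r := r)
    (by rw [length_gadgetWalk]; omega) (hlt ℓ)
  refine (Set.ncard_pos (Set.toFinite _)).2 ⟨m, hmW, ?_⟩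
  rcases mem_support_gadgetWalk hr occ ℓ 0 hm with rfl | rfl | ⟨t, rfl⟩
  exacts [absurd hmW.1 (lt_irrefl _), rfl, rfl]

theorem two_le_ncard_wreachSet_u_inter_var (hr : 3 ≤ r) (occ : φ.Occ) (ℓ : Fin (2 * r))
    (hlt : u occ.1 ℓ < v occ.2.1.1 occ.2.1.2)
    (hneg : v occ.2.1.1 occ.2.1.2 < v occ.2.1.1 !occ.2.1.2) :
    2 ≤ (wreachSet (GWR r φ) σ r (u occ.1 ℓ) ∩ var ⁻¹' {some occ.2.1.1}).ncard := by
  set W := wreachSet (GWR r φ) σ r (u occ.1 ℓ)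
  suffices ∃ x y, x ≠ y ∧ x ∈ W ∧ y ∈ W ∧ x.var = some occ.2.1.1 ∧ y.var = some occ.2.1.1 by
    obtain ⟨x, y, hxy, hx, hy, hxj, hyj⟩ := this
    rw [← Set.ncard_pair hxy]
    exact Set.ncard_le_ncard (Set.pair_subset ⟨hx, hxj⟩ ⟨hy, hyj⟩) (Set.toFinite _)
  have hmax (c : Fin 2) : ∃ m ∈ (gadgetWalk hr occ ℓ c).support,
      m ∈ W ∧ ∀ x ∈ (gadgetWalk hr occ ℓ c).support, x ≤ m := by
    simpa using (isPath_gadgetWalk hr occ ℓ c).reverse.exists_max_mem_wreachSet (r := r)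
      (by simp only [Walk.length_reverse, length_gadgetWalk]; omega) hlt
  have hcases (c : Fin 2) {m} (hm : m ∈ (gadgetWalk hr occ ℓ c).support) (hmW : m ∈ W) :
      m = v occ.2.1.1 occ.2.1.2 ∨ ∃ t, m = s occ ℓ c t := by
    rcases mem_support_gadgetWalk hr occ ℓ c hm with h | rfl | h
    exacts [.inl h, absurd hmW.1 (lt_irrefl _), .inr h]
  have hvar (c : Fin 2) {m} (hm : m ∈ (gadgetWalk hr occ ℓ c).support) (hmW : m ∈ W) :
      m.var = some occ.2.1.1 := by
    rcases hcases c hm hmW with rfl | ⟨t, rfl⟩ <;> rfl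
  obtain ⟨m₀, hm₀, hm₀W, hm₀max⟩ := hmax 0
  obtain ⟨m₁, hm₁, hm₁W, -⟩ := hmax 1
  by_cases h₀₁ : m₀ = m₁
  · -- the two copies share no subdivision vertex, so their common maximum is the literal vertex,
    -- and the edge to the complementary literal vertex then reaches one step further
    have hm₀v : m₀ = v occ.2.1.1 occ.2.1.2 := by
      subst h₀₁
      rcases hcases 0 hm₀ hm₀W with h | ⟨t, rfl⟩
      · exact h
      · rcases hcases 1 hm₁ hm₁W with h | ⟨t', h⟩ <;> simp at h
    subst hm₀v
    refine ⟨_, v occ.2.1.1 !occ.2.1.2, by simp, hm₀W, ?_, rfl, rfl⟩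
    exact (isPath_gadgetWalk hr occ ℓ 0).reverse.mem_wreachSet_of_adj
      (by simp only [Walk.length_reverse, length_gadgetWalk]; omega) (adj_v_v _ _)
      fun x hx => (hm₀max x (by simpa using hx)).trans_lt hneg
  · exact ⟨m₀, m₁, h₀₁, hm₀W, hm₁W, hvar 0 hm₀ hm₀W, hvar 1 hm₁ hm₁W⟩

theorem exists_two_mul_le_ncard_wreachSet (hr : 3 ≤ r) (i : Fin φ.m)
    (hneg : ∀ l ∈ φ.clauses i, v l.1 l.2 < v l.1 !l.2) :
    ∃ z, 2 * r ≤ (wreachSet (GWR r φ) σ r z).ncard := by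
  obtain ⟨ℓ₀, -, hℓ₀⟩ := univ.exists_min_image (u i) ⟨⟨0, by omega⟩, mem_univ _⟩
  by_cases h : ∃ l ∈ φ.clauses i, v l.1 l.2 < u i ℓ₀
  · obtain ⟨l, hl, hlt⟩ := h
    exact ⟨_, two_mul_le_ncard_wreachSet_v hr ⟨i, l, hl⟩
      fun ℓ => hlt.trans_le (hℓ₀ ℓ (mem_univ _))⟩
  push Not at h
  have hcard : #((φ.clauses i).image fun l => some l.1) = r := by
    rw [card_image_of_injOn fun l hl l' hl' hll' => φ.vars_distinct i l hl l' hl'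
      (Option.some_injective _ hll'), φ.clause_card]
  have key := card_mul_le_ncard_of_le_ncard_inter_preimage (Set.toFinite
    (wreachSet (GWR r φ) σ r (u i ℓ₀))) var ((φ.clauses i).image fun l => some l.1) (n := 2) ?_
  · exact ⟨u i ℓ₀, by rw [hcard] at key; linarith⟩
  simp only [mem_image]
  rintro _ ⟨l, hl, rfl⟩
  exact two_le_ncard_wreachSet_u_inter_var hr ⟨i, l, hl⟩ ℓ₀ ((h l hl).lt_of_ne (by simp))
    (hneg l hl)

end

end GWR

/-- If the reduction graph `G(φ)` of an Exact r-SAT instance `φ` (with `r ≥ 3`) has weak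
`r`-coloring number at most `2r - 1`, then `φ` has a satisfying assignment. -/
theorem wcolr_le_implies_sat (r : ℕ) (hr : 3 ≤ r) (φ : ExactSAT r)
    (h : wcolNum (GWR r φ) r ≤ 2 * r - 1) :
    φ.Satisfiable := by
  obtain ⟨σ, hσ⟩ := exists_linearOrder_ncard_wreachSet_le_wcolNum (GWR r φ) r
  refine ⟨fun j => decide (VtxWR.v j false < VtxWR.v j true), fun i => ?_⟩
  by_contra hunsat
  push Not at hunsat
  have hneg : ∀ l ∈ φ.clauses i, VtxWR.v l.1 l.2 < VtxWR.v l.1 !l.2 := by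
    intro l hl
    have := hunsat l hl
    cases hb : l.2 <;> simp_all [lt_iff_le_and_ne]
  obtain ⟨z, hz⟩ := GWR.exists_two_mul_le_ncard_wreachSet hr i hneg
  exact absurd (hz.trans ((hσ z).trans h)) (by omega)
end
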